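/- arXiv:1610.06864 — 5 statements merged into one kernel-verified Lean document; each statement's English description precedes it below -/
import Mathlib

section
/- Let X be a CAT(0) cube complex and let h ⊂ k ⊂ ℓ be three halfspaces such that h and k are strongly separated and k and ℓ are strongly separated. Then h and ℓ are über-separated, i.e., for any halfspaces k₁ transverse to h and k₂ transverse to ℓ, the hyperplanes of k₁ and k₂ are parallel (do not cross). -/
/-- A combinatorial model of (the vertex set / 1-skeleton of) a CAT(0) cube complex:
a discrete median space together with its system of hyperplanes (walls). -/
structure CCC where
  /-- vertices -/
  V : Type
  /-- hyperplanes -/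
  H : Type
  /-- each hyperplane cuts the vertex set into two halfspaces -/
  side : H → V → Bool
  /-- only finitely many hyperplanes separate two given vertices -/
  finsep : ∀ x y : V, Set.Finite {h : H | side h x ≠ side h y}
  /-- hyperplanes separate points -/
  eq_of_notsep : ∀ x y : V, (∀ h, side h x = side h y) → x = y
  /-- combinatorial geodesics exist: one can step from `x` towards `y` across a single wall -/
  exists_step : ∀ x y : V, x ≠ y →
    ∃ z : V, {h : H | side h x ≠ side h z}.ncard = 1 ∧
      {h : H | side h z ≠ side h y} ⊆ {h : H | side h x ≠ side h y} ∧
      {h : H | side h z ≠ side h y}.ncard + 1 = {h : H | side h x ≠ side h y}.ncard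
  /-- the median operation: on every wall, the median lies on the majority side -/
  median : V → V → V → V
  median_spec : ∀ x y z : V, ∀ h : H,
    (side h x = side h y → side h (median x y z) = side h x) ∧
    (side h y = side h z → side h (median x y z) = side h y) ∧
    (side h x = side h z → side h (median x y z) = side h x)
  /-- both halfspaces of a hyperplane are nonempty -/
  both_sides : ∀ (h : H) (b : Bool), ∃ v : V, side h v = b

namespace CCC

variable (X : CCC)

/-- the hyperplane `h` separates the vertices `x` and `y` -/
def Separates (h : X.H) (x y : X.V) : Prop := X.side h x ≠ X.side h y

/-- combinatorial distance: the number of separating hyperplanes -/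
noncomputable def cdist (x y : X.V) : ℕ := {h : X.H | X.Separates h x y}.ncard

/-- two hyperplanes cross (are transverse): all four sectors are nonempty -/
def Crosses (h k : X.H) : Prop :=
  ∀ a b : Bool, ∃ v : X.V, X.side h v = a ∧ X.side k v = b

/-- two (distinct, parallel) hyperplanes are strongly separated if no hyperplane is
transverse to both -/
def StronglySeparated (h k : X.H) : Prop :=
  h ≠ k ∧ ¬ X.Crosses h k ∧ ∀ m : X.H, ¬ (X.Crosses m h ∧ X.Crosses m k)

/-- two hyperplanes are über-separated if they are strongly separated and no two
crossing hyperplanes `k₁, k₂` exist with `k₁` crossing the first and `k₂` crossing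
the second -/
def UberSeparated (h k : X.H) : Prop :=
  X.StronglySeparated h k ∧
  ∀ k₁ k₂ : X.H, X.Crosses k₁ h → X.Crosses k₂ k → ¬ X.Crosses k₁ k₂

/-- the halfspace of the hyperplane `h` on the side `b` -/
def hs (h : X.H) (b : Bool) : Set X.V := {v | X.side h v = b}

/-- finite dimensionality: a uniform bound on families of pairwise crossing hyperplanes -/
def FiniteDim : Prop :=
  ∃ n : ℕ, ∀ F : Finset X.H, (∀ h ∈ F, ∀ k ∈ F, h ≠ k → X.Crosses h k) → F.card ≤ n

/-- irreducibility: the complex is not a product of two unbounded cube complexes,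
i.e. the hyperplanes do not split into two infinite families with all cross-pairs crossing -/
def Irreducible : Prop :=
  ¬ ∃ P : X.H → Bool, {h : X.H | P h = true}.Infinite ∧ {h : X.H | P h = false}.Infinite ∧
      ∀ h k : X.H, P h ≠ P k → X.Crosses h k

/-- the interval between two vertices: the union of all combinatorial geodesics -/
def Interval (x y : X.V) : Set X.V := {z | X.cdist x z + X.cdist z y = X.cdist x y}

/-- a combinatorial geodesic of length `n` -/
def IsGeod (γ : ℕ → X.V) (n : ℕ) : Prop :=
  ∀ i j : ℕ, i ≤ j → j ≤ n → X.cdist (γ i) (γ j) = j - i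

/-- a combinatorial geodesic ray -/
def IsRay (γ : ℕ → X.V) : Prop :=
  ∀ i j : ℕ, i ≤ j → X.cdist (γ i) (γ j) = j - i

/-- two rays are asymptotic (bounded Hausdorff distance) -/
def Asymp (γ γ' : ℕ → X.V) : Prop :=
  (∃ C : ℕ, ∀ i : ℕ, ∃ j : ℕ, X.cdist (γ i) (γ' j) ≤ C) ∧
  (∃ C : ℕ, ∀ i : ℕ, ∃ j : ℕ, X.cdist (γ' i) (γ j) ≤ C)

end CCC

lemma bool_flip : ∀ a b c d p q : Bool,
    (a = p ↔ c = q) → (b = p ↔ d = q) → (a ≠ b ↔ c ≠ d) := by decide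

lemma bool_ne (a b : Bool) (hab : a ≠ b) : a = !b := by
  revert hab; revert a b; decide

/-- Two distinct hyperplanes cannot induce the same partition of the vertices. -/
lemma dup_false (X : CCC) (h k : X.H) (hk : h ≠ k)
    (hflip : ∀ v w : X.V, (X.side h v ≠ X.side h w) ↔ (X.side k v ≠ X.side k w)) :
    False := by
  obtain ⟨x, hx⟩ := X.both_sides h true
  obtain ⟨y, hy⟩ := X.both_sides h false
  have hxy : X.side h x ≠ X.side h y := by simp [hx, hy]
  have main : ∀ n : ℕ, ∀ x y : X.V,
      {m : X.H | X.side m x ≠ X.side m y}.ncard = n → X.side h x ≠ X.side h y → False := by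
    intro n
    induction n using Nat.strong_induction_on with
    | _ n ih =>
      intro x y hn hsep
      have hne : x ≠ y := fun e => hsep (by rw [e])
      obtain ⟨z, h1, h2, h3⟩ := X.exists_step x y hne
      by_cases hc : X.side h x = X.side h z
      · have hzy : X.side h z ≠ X.side h y := fun e => hsep (hc.trans e)
        exact ih ({m : X.H | X.side m z ≠ X.side m y}.ncard) (by omega) z y rfl hzy
      · have hkc : X.side k x ≠ X.side k z := (hflip x z).mp hc
        have hsub : ({h, k} : Set X.H) ⊆ {m : X.H | X.side m x ≠ X.side m z} := by
          intro m hm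
          rcases hm with rfl | hm
          · exact hc
          · simp only [Set.mem_singleton_iff] at hm; subst hm; exact hkc
        have h2' : ({h, k} : Set X.H).ncard ≤ 1 := by
          rw [← h1]; exact Set.ncard_le_ncard hsub (X.finsep x z)
        rw [Set.ncard_pair hk] at h2'
        omega
  exact main _ x y rfl hxy

/-- If `h ⊂ k ⊂ ℓ` are nested halfspaces with `h, k` strongly separated and
`k, ℓ` strongly separated, then `h` and `ℓ` are über-separated. -/
theorem stmt0 (X : CCC) (h k l : X.H) (bh bk bl : Bool)
    (hnest₁ : X.hs h bh ⊆ X.hs k bk) (hnest₂ : X.hs k bk ⊆ X.hs l bl)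
    (hss₁ : X.StronglySeparated h k) (hss₂ : X.StronglySeparated k l) :
    X.UberSeparated h l := by
  have nest1 : ∀ v, X.side h v = bh → X.side k v = bk := fun v hv => hnest₁ hv
  have nest2 : ∀ v, X.side k v = bk → X.side l v = bl := fun v hv => hnest₂ hv
  have nest2' : ∀ v, X.side l v = !bl → X.side k v = !bk := by
    intro v hv
    have hne : X.side k v ≠ bk := by
      intro hkv
      rw [nest2 v hkv] at hv
      exact (Bool.not_ne_self bl) hv.symm
    exact bool_ne _ _ hne
  -- h ≠ l
  have hne : h ≠ l := by
    intro heq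
    subst heq
    by_cases hb : bh = bl
    · subst hb
      refine dup_false X h k hss₁.1 ?_
      intro v w
      exact bool_flip _ _ _ _ bh bk ⟨nest1 v, nest2 v⟩ ⟨nest1 w, nest2 w⟩
    · obtain ⟨v, hv⟩ := X.both_sides h bh
      have := nest2 v (nest1 v hv)
      rw [hv] at this
      exact hb this
  -- ¬ Crosses h l
  have hnc : ¬ X.Crosses h l := by
    intro hc
    obtain ⟨v, hv1, hv2⟩ := hc bh (!bl)
    have := nest2 v (nest1 v hv1)
    rw [this] at hv2
    exact (Bool.not_ne_self bl) hv2.symm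
  -- no hyperplane crosses both h and l
  have hthird : ∀ m : X.H, ¬ (X.Crosses m h ∧ X.Crosses m l) := by
    rintro m ⟨c1, c2⟩
    refine hss₁.2.2 m ⟨c1, ?_⟩
    intro a b
    by_cases hb : b = bk
    · obtain ⟨v, hv1, hv2⟩ := c1 a bh
      exact ⟨v, hv1, by rw [nest1 v hv2, hb]⟩
    · obtain ⟨v, hv1, hv2⟩ := c2 a (!bl)
      exact ⟨v, hv1, by rw [nest2' v hv2, ← bool_ne b bk hb]⟩
  refine ⟨⟨hne, hnc, hthird⟩, ?_⟩
  -- über part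
  intro k₁ k₂ c1 c2 c12
  -- k₁ does not cross k
  have nk1 : ¬ X.Crosses k₁ k := fun c => hss₁.2.2 k₁ ⟨c1, c⟩
  have nk2 : ¬ X.Crosses k₂ k := fun c => hss₂.2.2 k₂ ⟨c, c2⟩
  simp only [CCC.Crosses, not_forall, not_exists, not_and] at nk1 nk2
  obtain ⟨a₁, b₁, hb1⟩ := nk1
  obtain ⟨a₂, b₂, hb2⟩ := nk2
  -- b₁ must be !bk : both sides of k₁ meet hs k bk via crossing h
  have hb1' : b₁ = !bk := by
    refine bool_ne _ _ ?_
    rintro rfl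
    obtain ⟨v, hv1, hv2⟩ := c1 a₁ bh
    exact hb1 v hv1 (nest1 v hv2)
  -- b₂ must be bk : both sides of k₂ meet hs k (!bk) via crossing l
  have hb2' : b₂ = bk := by
    by_contra hcon
    have : b₂ = !bk := bool_ne _ _ hcon
    subst this
    obtain ⟨v, hv1, hv2⟩ := c2 a₂ (!bl)
    exact hb2 v hv1 (nest2' v hv2)
  rw [hb1'] at hb1
  rw [hb2'] at hb2
  -- so hs k₁ a₁ ⊆ hs k bk and hs k₂ a₂ ⊆ hs k !bk, contradicting k₁ crossing k₂
  obtain ⟨v, hv1, hv2⟩ := c12 a₁ a₂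
  have e1 : X.side k v = bk := by
    have := hb1 v hv1
    by_contra hcon
    exact this (bool_ne _ _ hcon)
  have e2 : X.side k v ≠ bk := fun e => hb2 v hv2 e
  exact e2 e1
end

section
/- Let g be an isometry of a CAT(0) space X admitting an axis Λ_g (a g-invariant geodesic line on which g acts by translation), and suppose that at some point p ∈ Λ_g the two geodesic sides of Λ_g make an Alexandrov angle strictly greater than π at p in the sense that Λ_g contains no flat half-plane neighborhood. If z ∈ ∂X is a boundary point fixed by g with z ∉ {g^{+∞}, g^{-∞}}, and γ is a geodesic ray from a point of Λ_g to z meeting Λ_g in exactly one point, such that the convex hull of γ ∪ g²γ isometrically embeds in ℝ², then a contradiction arises: hence the only boundary points fixed by g are g^{+∞} and g^{-∞}. -/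
/-- A CAT(0) space: a metric space with midpoints satisfying the CN-inequality of
Bruhat–Tits (equivalent to the CAT(0) comparison condition for geodesic spaces). -/
def CAT0Space (Y : Type*) [MetricSpace Y] : Prop :=
  (∀ x y : Y, ∃ m : Y, dist x m = dist x y / 2 ∧ dist m y = dist x y / 2) ∧
  (∀ x y z m : Y, dist y m = dist y z / 2 → dist m z = dist y z / 2 →
    dist x m ^ 2 ≤ (dist x y ^ 2 + dist x z ^ 2) / 2 - dist y z ^ 2 / 4)

/-- a geodesically convex subset (closed under midpoints) -/
def GeoConvex {Y : Type*} [MetricSpace Y] (S : Set Y) : Prop :=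
  ∀ x ∈ S, ∀ y ∈ S, ∀ m : Y, dist x m = dist x y / 2 → dist m y = dist x y / 2 → m ∈ S

/-- the (geodesic) convex hull of a subset -/
def geoHull {Y : Type*} [MetricSpace Y] (A : Set Y) : Set Y :=
  ⋂₀ {S : Set Y | GeoConvex S ∧ A ⊆ S}

/-- a geodesic line, parametrized by arclength -/
def IsGeodLine {Y : Type*} [MetricSpace Y] (c : ℝ → Y) : Prop :=
  ∀ s t : ℝ, dist (c s) (c t) = |s - t|

/-- a geodesic ray, parametrized by arclength on `[0, ∞)` -/
def IsGeodRay {Y : Type*} [MetricSpace Y] (γ : ℝ → Y) : Prop :=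
  ∀ s t : ℝ, 0 ≤ s → 0 ≤ t → dist (γ s) (γ t) = |s - t|

/-- a flat half-plane in `Y` attached along the geodesic `c` near the parameter `t₀`:
an isometric copy of a Euclidean half-plane whose boundary line contains the subsegment
`c([t₀ - ε, t₀ + ε])` of the geodesic. -/
def FlatHalfPlaneAlong {Y : Type*} [MetricSpace Y] (c : ℝ → Y) (t₀ : ℝ) : Prop :=
  ∃ (ε : ℝ) (φ : EuclideanSpace ℝ (Fin 2) → Y), 0 < ε ∧
    (∀ u v : EuclideanSpace ℝ (Fin 2), 0 ≤ u 1 → 0 ≤ v 1 →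
      dist (φ u) (φ v) = dist u v) ∧
    ∀ t : ℝ, |t - t₀| ≤ ε →
      φ ((WithLp.equiv 2 (Fin 2 → ℝ)).symm ![t, 0]) = c t


/-!
Since `g` moves `γ` a bounded distance, `γ` and `g²γ` are rays at bounded distance starting on
the axis, `2τ` apart. In the plane containing their hull they become parallel rays, and by
completeness the planar strip between them pulls back to a flat strip in `Y` whose bottom edge
is the axis. The distance between geodesics being convex, `gγ` is the middle ray of the strip,
so `g` acts on the strip as a shift by `τ`. The translates of the strip under the powers of `g`
glue to a locally flat half-plane, which is flat since local geodesics in a CAT(0) space are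
geodesics. As `γ` meets the axis only once, the strip does not degenerate to a segment, so this
is a genuine flat half-plane whose boundary contains a segment of the axis, contradicting the
angle condition.
-/

open Set Filter Topology

section Hull
variable {Y : Type*} [MetricSpace Y]

lemma geoConvex_geoHull (A : Set Y) : GeoConvex (geoHull A) := fun x hx y hy m hxm hmy =>
  mem_sInter.2 fun S hS => hS.1 x (mem_sInter.1 hx S hS) y (mem_sInter.1 hy S hS) m hxm hmy

lemma subset_geoHull (A : Set Y) : A ⊆ geoHull A := fun _ ha => mem_sInter.2 fun _ hS => hS.2 ha

end Hull

namespace CAT0Space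
variable {Y : Type*} [MetricSpace Y]

lemma eq_of_dist_add_dist_eq (hY : CAT0Space Y) {x z p q : Y}
    (hp : dist x p + dist p z = dist x z) (hxq : dist x q = dist x p)
    (hqz : dist q z = dist p z) : p = q := by
  obtain ⟨m, hpm, hmq⟩ := hY.1 p q
  have hx := hY.2 x p q m hpm hmq
  have hz := hY.2 z p q m hpm hmq
  rw [hxq] at hx
  rw [dist_comm z p, dist_comm z q, hqz] at hz
  have hxm : dist x m ≤ dist x p :=
    (pow_le_pow_iff_left₀ dist_nonneg dist_nonneg two_ne_zero).1 (by nlinarith)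
  have hzm : dist z m ≤ dist p z :=
    (pow_le_pow_iff_left₀ dist_nonneg dist_nonneg two_ne_zero).1 (by nlinarith)
  have hxm' : dist x m = dist x p := by linarith [dist_triangle x m z, dist_comm m z]
  rw [hxm'] at hx
  exact dist_eq_zero.1 (pow_eq_zero_iff two_ne_zero |>.1 (by nlinarith [sq_nonneg (dist p q)]))

lemma dist_le_half_of_midpoints (hY : CAT0Space Y) {x y z my mz : Y}
    (hxmy : dist x my = dist x y / 2) (hmyy : dist my y = dist x y / 2)
    (hxmz : dist x mz = dist x z / 2) (hmzz : dist mz z = dist x z / 2) :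
    dist my mz ≤ dist y z / 2 := by
  have hz := hY.2 z x y my hxmy hmyy
  have hmy := hY.2 my x z mz hxmz hmzz
  rw [dist_comm z x, dist_comm z y] at hz
  rw [dist_comm my x, dist_comm my z, hxmy] at hmy
  refine (pow_le_pow_iff_left₀ dist_nonneg (by positivity) two_ne_zero).1 ?_
  nlinarith

/-- By induction on `n`: the CN inequality at `p (m + 1)`, the midpoint of `p m` and `p (m + 2)`,
bounds `dist (p 0) (p (m + 2))` from below by `(m + 2) * δ`. -/
lemma dist_eq_of_chain (hY : CAT0Space Y) (p : ℕ → Y) (δ : ℝ) (n : ℕ)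
    (h1 : ∀ k, k + 1 ≤ n → dist (p k) (p (k + 1)) = δ)
    (h2 : ∀ k, k + 2 ≤ n → dist (p k) (p (k + 2)) = 2 * δ) :
    dist (p 0) (p n) = n * δ := by
  induction n using Nat.strong_induction_on with
  | _ n ih =>
    match n with
    | 0 => simp
    | 1 => simpa using h1 0 le_rfl
    | m + 2 =>
      have hδ : 0 ≤ δ := h1 0 (by omega) ▸ dist_nonneg
      have hm : dist (p 0) (p m) = m * δ :=
        ih m (by omega) (fun k hk => h1 k (by omega)) (fun k hk => h2 k (by omega))
      have hm1 : dist (p 0) (p (m + 1)) = (m + 1 : ℕ) * δ :=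
        ih (m + 1) (by omega) (fun k hk => h1 k (by omega)) (fun k hk => h2 k (by omega))
      have hcn := hY.2 (p 0) (p m) (p (m + 2)) (p (m + 1))
        (by rw [h1 m (by omega), h2 m (by omega)]; ring)
        (by rw [h1 (m + 1) (by omega), h2 m (by omega)]; ring)
      rw [hm, hm1, h2 m (by omega)] at hcn
      have hub := dist_triangle (p 0) (p (m + 1)) (p (m + 2))
      rw [hm1, h1 (m + 1) (by omega)] at hub
      push_cast at hcn hub ⊢
      refine le_antisymm (by linarith) ((pow_le_pow_iff_left₀ (by positivity) dist_nonneg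
        two_ne_zero).1 (by nlinarith))

lemma eq_of_isGeodRay_of_dist_le (hY : CAT0Space Y) {α β : ℝ → Y} (hα : IsGeodRay α)
    (hβ : IsGeodRay β) (h0 : α 0 = β 0) {C : ℝ} (hC : ∀ t ≥ 0, dist (α t) (β t) ≤ C) :
    ∀ t ≥ 0, α t = β t := by
  have hhalf : ∀ t ≥ 0, dist (α t) (β t) ≤ dist (α (2 * t)) (β (2 * t)) / 2 := by
    intro t ht
    have h2t : 0 ≤ 2 * t := by linarith
    have hmid : ∀ δ : ℝ → Y, IsGeodRay δ →
        dist (δ 0) (δ t) = dist (δ 0) (δ (2 * t)) / 2 ∧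
          dist (δ t) (δ (2 * t)) = dist (δ 0) (δ (2 * t)) / 2 := fun δ hδ => by
      rw [hδ 0 t le_rfl ht, hδ t (2 * t) ht h2t, hδ 0 (2 * t) le_rfl h2t,
        show |0 - t| = t by simp [abs_of_nonneg ht], show |t - 2 * t| = t by
          rw [abs_sub_comm]; ring_nf; exact abs_of_nonneg ht,
        show |0 - 2 * t| = 2 * t by simp [abs_of_nonneg h2t]]
      constructor <;> ring
    obtain ⟨hα1, hα2⟩ := hmid α hα
    obtain ⟨hβ1, hβ2⟩ := hmid β hβ
    rw [h0] at hα1 hα2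
    exact hY.dist_le_half_of_midpoints hα1 hα2 hβ1 hβ2
  have hpow : ∀ n : ℕ, ∀ t ≥ 0, dist (α t) (β t) ≤ C * (1 / 2) ^ n := by
    intro n
    induction n with
    | zero => simpa using hC
    | succ n ih =>
      intro t ht
      have := ih (2 * t) (by linarith)
      rw [pow_succ]
      linarith [hhalf t ht]
  intro t ht
  have hlim : Tendsto (fun n : ℕ => C * (1 / 2 : ℝ) ^ n) atTop (𝓝 0) := by
    simpa using (tendsto_pow_atTop_nhds_zero_of_lt_one (by norm_num) (by norm_num :
      (1 / 2 : ℝ) < 1)).const_mul C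
  exact dist_le_zero.1 (ge_of_tendsto' hlim fun n => hpow n t ht)

/-- Local geodesics are geodesics. -/
lemma dist_eq_of_locally_dist_eq (hY : CAT0Space Y) {f : ℝ → Y} {L r : ℝ} (hr : 0 < r)
    (hf : ∀ a ∈ Icc (0 : ℝ) 1, ∀ b ∈ Icc (0 : ℝ) 1, |a - b| ≤ r → dist (f a) (f b) = |a - b| * L) :
    dist (f 0) (f 1) = L := by
  obtain ⟨N, hN⟩ := exists_nat_gt (2 / r)
  have hNpos : (0 : ℝ) < N := lt_trans (by positivity) hN
  have hstep : ∀ k j : ℕ, k + j ≤ N → j ≤ 2 →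
      dist (f (k / N)) (f ((k + j : ℕ) / N)) = j * (L / N) := by
    intro k j hkj hj
    have hmem : ∀ i : ℕ, i ≤ N → (i : ℝ) / N ∈ Icc (0 : ℝ) 1 := fun i hi =>
      ⟨by positivity, div_le_one_of_le₀ (by exact_mod_cast hi) hNpos.le⟩
    have hdiff : |(k : ℝ) / N - ((k + j : ℕ) : ℝ) / N| = j / N := by
      rw [Nat.cast_add, ← sub_div, abs_div, abs_of_pos hNpos, sub_add_cancel_left, abs_neg,
        Nat.abs_cast]
    rw [hf _ (hmem k (by omega)) _ (hmem _ hkj), hdiff]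
    · ring
    rw [hdiff, div_le_iff₀ hNpos]
    rw [div_lt_iff₀ hr] at hN
    have : (j : ℝ) ≤ 2 := by exact_mod_cast hj
    nlinarith
  have := hY.dist_eq_of_chain (fun k => f (k / N)) (L / N) N
    (fun k hk => by simpa using hstep k 1 hk (by norm_num))
    (fun k hk => by simpa using hstep k 2 hk le_rfl)
  simpa [div_self hNpos.ne', mul_div_cancel₀ _ hNpos.ne'] using this

end CAT0Space

section Normed
variable {E : Type*} [NormedAddCommGroup E] [NormedSpace ℝ E]

lemma IsGeodRay.eq_add_smul [StrictConvexSpace ℝ E] {r : ℝ → E} (hr : IsGeodRay r) {t : ℝ}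
    (ht : 0 ≤ t) : r t = r 0 + t • (r 1 - r 0) := by
  set T := max t 1
  have hT : 0 < T := lt_of_lt_of_le one_pos (le_max_right t 1)
  have hdist : dist (r 0) (r T) = T := by
    rw [hr 0 T le_rfl hT.le, zero_sub, abs_neg, abs_of_pos hT]
  have hon : ∀ x, 0 ≤ x → x ≤ T → r x = r 0 + (x / T) • (r T - r 0) := fun x hx0 hxT => by
    rw [eq_lineMap_of_dist_eq_mul_of_dist_eq_mul (x := r 0) (y := r x) (z := r T) (r := x / T),
      AffineMap.lineMap_apply, vsub_eq_sub, vadd_eq_add, add_comm]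
    · rw [hr 0 x le_rfl hx0, hdist, div_mul_cancel₀ _ hT.ne', zero_sub, abs_neg, abs_of_nonneg hx0]
    · rw [hr x T hx0 hT.le, hdist, abs_sub_comm, abs_of_nonneg (by linarith)]
      field_simp
  rw [hon t ht (le_max_left t 1), hon 1 zero_le_one (le_max_right t 1), add_sub_cancel_left,
    smul_smul]
  congr 2
  field_simp

lemma eq_of_forall_norm_add_smul_sub_le {a b u v : E} {C : ℝ}
    (h : ∀ t : ℝ, 0 ≤ t → ‖(a + t • u) - (b + t • v)‖ ≤ C) : u = v := by
  by_contra huv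
  have hpos : 0 < ‖u - v‖ := norm_pos_iff.2 (sub_ne_zero.2 huv)
  set t := (C + ‖a - b‖ + 1) / ‖u - v‖
  have hC : 0 ≤ C := le_trans (norm_nonneg _) (h 0 le_rfl)
  have ht : 0 ≤ t := by positivity
  have hlow : ‖t • (u - v)‖ ≤ C + ‖a - b‖ := by
    calc ‖t • (u - v)‖ = ‖((a + t • u) - (b + t • v)) - (a - b)‖ := by congr 1; module
      _ ≤ ‖(a + t • u) - (b + t • v)‖ + ‖a - b‖ := norm_sub_le _ _
      _ ≤ C + ‖a - b‖ := by linarith [h t ht]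
  rw [norm_smul, Real.norm_of_nonneg ht, div_mul_cancel₀ _ hpos.ne'] at hlow
  linarith

lemma add_dyadic_smul_sub_mem {S : Set E} (hS : ∀ x ∈ S, ∀ y ∈ S, midpoint ℝ x y ∈ S)
    (k : ℕ) : ∀ x ∈ S, ∀ y ∈ S, ∀ j : ℕ, j ≤ 2 ^ k → x + ((j : ℝ) / 2 ^ k) • (y - x) ∈ S := by
  induction k with
  | zero =>
    intro x hx y hy j hj
    interval_cases j <;> simpa
  | succ k ih =>
    intro x hx y hy j hj
    have hm := hS x hx y hy
    rw [midpoint_eq_smul_add, invOf_eq_inv] at hm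
    rcases le_or_gt j (2 ^ k) with hjk | hjk
    · convert ih x hx _ hm j hjk using 1
      rw [pow_succ]
      module
    · obtain ⟨i, rfl⟩ := Nat.exists_eq_add_of_le hjk.le
      convert ih _ hm y hy i (by rw [pow_succ] at hj; omega) using 1
      rw [show ((2 ^ k + i : ℕ) : ℝ) / 2 ^ (k + 1) = 2⁻¹ + 2⁻¹ * (i / 2 ^ k) by
        push_cast; rw [pow_succ]; field_simp]
      module

lemma segment_subset_closure_of_midpoint_mem {S : Set E}
    (hS : ∀ x ∈ S, ∀ y ∈ S, midpoint ℝ x y ∈ S) {x y : E} (hx : x ∈ S) (hy : y ∈ S) :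
    segment ℝ x y ⊆ closure S := by
  rw [segment_eq_image']
  rintro _ ⟨r, ⟨hr0, hr1⟩, rfl⟩
  refine Metric.mem_closure_iff.2 fun ε hε => ?_
  obtain ⟨k, hk⟩ := exists_pow_lt_of_lt_one (div_pos hε (by positivity : (0:ℝ) < ‖y - x‖ + 1))
    (by norm_num : (1 / 2 : ℝ) < 1)
  have h2k : (0 : ℝ) < 2 ^ k := by positivity
  set j := ⌊r * 2 ^ k⌋₊
  have hj : j ≤ 2 ^ k := Nat.floor_le_of_le (by push_cast; nlinarith)
  refine ⟨_, add_dyadic_smul_sub_mem hS k x hx y hy j hj, ?_⟩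
  have hjr : |r - j / 2 ^ k| ≤ (1 / 2) ^ k := by
    have hlo : (j : ℝ) ≤ r * 2 ^ k := Nat.floor_le (by positivity)
    have hhi : r * 2 ^ k < j + 1 := Nat.lt_floor_add_one _
    rw [show r - j / 2 ^ k = (r * 2 ^ k - j) / 2 ^ k by field_simp, abs_div, abs_of_pos h2k,
      one_div_pow, div_le_div_iff_of_pos_right h2k, abs_le]
    constructor <;> linarith
  rw [dist_eq_norm, show x + r • (y - x) - (x + (j / 2 ^ k : ℝ) • (y - x))
    = (r - j / 2 ^ k) • (y - x) by module, norm_smul, Real.norm_eq_abs]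
  rw [lt_div_iff₀ (by positivity)] at hk
  nlinarith [norm_nonneg (y - x), abs_nonneg (r - j / 2 ^ k)]

end Normed

section Extension
variable {Y E : Type*} [MetricSpace Y] [MetricSpace E] {H : Set Y} {φ : Y → E}

lemma exists_forall_dist_eq_of_mem_closure [CompleteSpace Y]
    (hφ : ∀ p ∈ H, ∀ q ∈ H, dist (φ p) (φ q) = dist p q) {P : E} (hP : P ∈ closure (φ '' H)) :
    ∃ y : Y, ∀ z ∈ H, dist y z = dist P (φ z) := by
  obtain ⟨u, hu, hlim⟩ := mem_closure_iff_seq_limit.1 hP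
  choose z hzH hz using hu
  have hcauchy : CauchySeq z := by
    have hu := hlim.cauchySeq
    rw [Metric.cauchySeq_iff] at hu ⊢
    intro ε hε
    obtain ⟨N, hN⟩ := hu ε hε
    exact ⟨N, fun m hm n hn => by rw [← hφ _ (hzH m) _ (hzH n), hz, hz]; exact hN m hm n hn⟩
  obtain ⟨y, hy⟩ := cauchySeq_tendsto_of_complete hcauchy
  refine ⟨y, fun w hw => tendsto_nhds_unique (hy.dist tendsto_const_nhds) ?_⟩
  simpa only [← hz, hφ _ (hzH _) _ hw] using hlim.dist (tendsto_const_nhds (x := φ w))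

lemma dist_eq_of_forall_dist_eq {P Q : E} {y y' : Y} (hQ : Q ∈ closure (φ '' H))
    (hy : ∀ z ∈ H, dist y z = dist P (φ z)) (hy' : ∀ z ∈ H, dist y' z = dist Q (φ z)) :
    dist y y' = dist P Q := by
  obtain ⟨u, hu, hlim⟩ := mem_closure_iff_seq_limit.1 hQ
  choose z hzH hz using hu
  have hzy' : Tendsto z atTop (𝓝 y') := by
    rw [tendsto_iff_dist_tendsto_zero]
    simpa [dist_comm _ y', hy' _ (hzH _), hz] using
      (tendsto_const_nhds (x := Q)).dist hlim
  refine tendsto_nhds_unique ((tendsto_const_nhds (x := y)).dist hzy') ?_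
  simpa [hy _ (hzH _), hz] using (tendsto_const_nhds (x := P)).dist hlim

lemma exists_extension_closure [CompleteSpace Y] [Nonempty Y]
    (hφ : ∀ p ∈ H, ∀ q ∈ H, dist (φ p) (φ q) = dist p q) :
    ∃ ψ : E → Y, (∀ P ∈ closure (φ '' H), ∀ Q ∈ closure (φ '' H), dist (ψ P) (ψ Q) = dist P Q) ∧
      ∀ z ∈ H, ψ (φ z) = z := by
  have hex : ∀ P, ∃ y : Y, P ∈ closure (φ '' H) → ∀ z ∈ H, dist y z = dist P (φ z) := by
    intro P
    by_cases hP : P ∈ closure (φ '' H)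
    · exact (exists_forall_dist_eq_of_mem_closure hφ hP).imp fun _ h _ => h
    · exact ⟨Classical.arbitrary Y, fun h => absurd h hP⟩
  choose ψ hψ using hex
  refine ⟨ψ, fun P hP Q hQ => dist_eq_of_forall_dist_eq hQ (hψ P hP) (hψ Q hQ), fun z hz => ?_⟩
  have := hψ (φ z) (subset_closure (Set.mem_image_of_mem φ hz)) z hz
  rwa [dist_self, dist_eq_zero] at this

end Extension

/-- `ψ` parametrizes an isometric copy of the planar region `{s • w + t • v | s ∈ I, 0 ≤ t}`. -/
def IsFlatOn {Y E : Type*} [MetricSpace Y] [NormedAddCommGroup E] [NormedSpace ℝ E]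
    (ψ : ℝ → ℝ → Y) (w v : E) (I : Set ℝ) : Prop :=
  ∀ s ∈ I, ∀ s' ∈ I, ∀ t : ℝ, 0 ≤ t → ∀ t' : ℝ, 0 ≤ t' →
    dist (ψ s t) (ψ s' t') = ‖(s - s') • w + (t - t') • v‖

section FlatStrip
variable {Y E : Type*} [MetricSpace Y] [NormedAddCommGroup E] [NormedSpace ℝ E]

lemma CAT0Space.midpoint_mem_image [StrictConvexSpace ℝ E] (hY : CAT0Space Y) {H : Set Y}
    (hH : GeoConvex H) {φ : Y → E} (hφ : ∀ p ∈ H, ∀ q ∈ H, dist (φ p) (φ q) = dist p q) :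
    ∀ P ∈ φ '' H, ∀ Q ∈ φ '' H, midpoint ℝ P Q ∈ φ '' H := by
  rintro _ ⟨x, hx, rfl⟩ _ ⟨y, hy, rfl⟩
  obtain ⟨m, hxm, hmy⟩ := hY.1 x y
  have hm := hH x hx y hy m hxm hmy
  refine ⟨m, hm, eq_midpoint_of_dist_eq_half ?_ ?_⟩
  · rw [hφ _ hx _ hm, hφ _ hx _ hy, hxm]
  · rw [hφ _ hm _ hy, hφ _ hx _ hy, hmy]

lemma IsGeodRay.map_eq_add_smul [StrictConvexSpace ℝ E] {H : Set Y} {φ : Y → E}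
    (hφ : ∀ p ∈ H, ∀ q ∈ H, dist (φ p) (φ q) = dist p q) {r : ℝ → Y} (hr : IsGeodRay r)
    (hrH : ∀ t : ℝ, 0 ≤ t → r t ∈ H) {t : ℝ} (ht : 0 ≤ t) :
    φ (r t) = φ (r 0) + t • (φ (r 1) - φ (r 0)) :=
  IsGeodRay.eq_add_smul (r := φ ∘ r)
    (fun s t hs ht => by simp [hφ _ (hrH s hs) _ (hrH t ht), hr s t hs ht]) ht

/-- The images of the rays are parallel, the segments between them lie in the closure of the
image of the hull, and completeness pulls this planar strip back to `Y`. -/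
theorem exists_isFlatOn_of_isometric_on_hull [CompleteSpace Y] [StrictConvexSpace ℝ E]
    (hY : CAT0Space Y) {H : Set Y} (hH : GeoConvex H) {φ : Y → E}
    (hφ : ∀ p ∈ H, ∀ q ∈ H, dist (φ p) (φ q) = dist p q) {γ ρ : ℝ → Y} (hγ : IsGeodRay γ)
    (hρ : IsGeodRay ρ) (hγH : ∀ t : ℝ, 0 ≤ t → γ t ∈ H) (hρH : ∀ t : ℝ, 0 ≤ t → ρ t ∈ H)
    {C : ℝ} (hC : ∀ t : ℝ, 0 ≤ t → dist (γ t) (ρ t) ≤ C) (h0 : γ 0 ≠ ρ 0) :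
    ∃ (w v : E) (ψ : ℝ → ℝ → Y), ‖w‖ = 1 ∧ ‖v‖ = 1 ∧
      IsFlatOn ψ w v (Icc 0 (dist (γ 0) (ρ 0))) ∧
      (∀ t : ℝ, 0 ≤ t → ψ 0 t = γ t) ∧ ∀ t : ℝ, 0 ≤ t → ψ (dist (γ 0) (ρ 0)) t = ρ t := by
  have : Nonempty Y := ⟨γ 0⟩
  set L := dist (γ 0) (ρ 0)
  have hL : 0 < L := dist_pos.2 h0
  set a := φ (γ 0)
  set v := φ (γ 1) - a
  set b := φ (ρ 0)
  have hv : ‖v‖ = 1 := by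
    rw [← dist_eq_norm, hφ _ (hγH 1 zero_le_one) _ (hγH 0 le_rfl), hγ 1 0 zero_le_one le_rfl]
    norm_num
  have hρv : φ (ρ 1) - b = v := eq_of_forall_norm_add_smul_sub_le (a := b) (b := a) (C := C)
    fun t ht => by
      rw [← hρ.map_eq_add_smul hφ hρH ht, ← hγ.map_eq_add_smul hφ hγH ht, ← dist_eq_norm,
        hφ _ (hρH t ht) _ (hγH t ht), dist_comm]
      exact hC t ht
  set w := L⁻¹ • (b - a)
  have hba : b = a + L • w := by simp only [w, smul_smul, mul_inv_cancel₀ hL.ne', one_smul]; abel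
  have hw : ‖w‖ = 1 := by
    rw [norm_smul, ← dist_eq_norm, hφ _ (hρH 0 le_rfl) _ (hγH 0 le_rfl), dist_comm,
      Real.norm_of_nonneg (inv_nonneg.2 hL.le), inv_mul_cancel₀ hL.ne']
  have hγt : ∀ t : ℝ, 0 ≤ t → φ (γ t) = a + t • v := fun t ht => hγ.map_eq_add_smul hφ hγH ht
  have hρt : ∀ t : ℝ, 0 ≤ t → φ (ρ t) = a + L • w + t • v := fun t ht => by
    rw [hρ.map_eq_add_smul hφ hρH ht, hρv, ← hba]
  have hstrip : ∀ s ∈ Icc 0 L, ∀ t : ℝ, 0 ≤ t → a + s • w + t • v ∈ closure (φ '' H) := by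
    intro s hs t ht
    refine segment_subset_closure_of_midpoint_mem (hY.midpoint_mem_image hH hφ)
      ⟨γ t, hγH t ht, rfl⟩ ⟨ρ t, hρH t ht, rfl⟩ ?_
    rw [segment_eq_image']
    refine ⟨s / L, ⟨div_nonneg hs.1 hL.le, div_le_one_of_le₀ hs.2 hL.le⟩, ?_⟩
    beta_reduce
    rw [hγt t ht, hρt t ht,
      show a + L • w + t • v - (a + t • v) = L • w by abel, smul_smul, div_mul_cancel₀ _ hL.ne']
    abel
  obtain ⟨ψ₀, hψ₀, hψ₀φ⟩ := exists_extension_closure hφ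
  refine ⟨w, v, fun s t => ψ₀ (a + s • w + t • v), hw, hv, ?_, ?_, ?_⟩
  · intro s hs s' hs' t ht t' ht'
    rw [hψ₀ _ (hstrip s hs t ht) _ (hstrip s' hs' t' ht'), dist_eq_norm]
    congr 1
    module
  · intro t ht
    beta_reduce
    rw [zero_smul, add_zero, ← hγt t ht, hψ₀φ _ (hγH t ht)]
  · intro t ht
    beta_reduce
    rw [← hρt t ht, hψ₀φ _ (hρH t ht)]

end FlatStrip

section Gluing
variable {Y E : Type*} [MetricSpace Y] [NormedAddCommGroup E] [NormedSpace ℝ E]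
  {Ψ : ℝ → ℝ → Y} {w v : E}

lemma dist_eq_of_isFlatOn_Icc_add {τ : ℝ} (h : ∀ s₁ : ℝ, IsFlatOn Ψ w v (Icc s₁ (s₁ + τ)))
    {s s' t t' : ℝ} (hs : |s - s'| ≤ τ) (ht : 0 ≤ t) (ht' : 0 ≤ t') :
    dist (Ψ s t) (Ψ s' t') = ‖(s - s') • w + (t - t') • v‖ := by
  obtain ⟨h₁, h₂⟩ := abs_sub_le_iff.1 hs
  refine h (min s s') s ⟨min_le_left _ _, ?_⟩ s' ⟨min_le_right _ _, ?_⟩ t ht t' ht' <;>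
    rcases min_choice s s' with hm | hm <;> rw [hm] <;> linarith

lemma exists_isFlatOn_Icc_add (g : Y ≃ᵢ Y) {τ : ℝ} (hτ : 0 < τ) {ψ : ℝ → ℝ → Y}
    (hψ : IsFlatOn ψ w v (Icc 0 (2 * τ)))
    (hg : ∀ s ∈ Icc 0 τ, ∀ t : ℝ, 0 ≤ t → g (ψ s t) = ψ (s + τ) t) :
    ∃ Ψ : ℝ → ℝ → Y, (∀ s ∈ Icc 0 (2 * τ), ∀ t : ℝ, 0 ≤ t → Ψ s t = ψ s t) ∧
      ∀ s₁ : ℝ, IsFlatOn Ψ w v (Icc s₁ (s₁ + τ)) := by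
  set Ψ : ℝ → ℝ → Y := fun s t => (g ^ ⌊s / τ⌋) (ψ (Int.fract (s / τ) * τ) t)
  have hshift : ∀ (n : ℤ) (s t : ℝ), Ψ (s + n * τ) t = (g ^ n) (Ψ s t) := by
    intro n s t
    simp only [Ψ]
    rw [show (s + n * τ) / τ = s / τ + n by field_simp, Int.floor_add_intCast,
      Int.fract_add_intCast, add_comm _ n, zpow_add, IsometryEquiv.mul_apply]
  have hsmall : ∀ s ∈ Ico 0 τ, ∀ t : ℝ, Ψ s t = ψ s t := by
    intro s ⟨hs0, hsτ⟩ t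
    have hs : s / τ ∈ Ico (0 : ℝ) 1 := ⟨by positivity, (div_lt_one hτ).2 hsτ⟩
    simp only [Ψ, Int.floor_eq_zero_iff.2 hs, Int.fract_eq_self.2 hs, zpow_zero,
      div_mul_cancel₀ _ hτ.ne']
    rfl
  have hleft : ∀ s ∈ Icc 0 τ, ∀ t : ℝ, 0 ≤ t → Ψ s t = ψ s t := by
    intro s ⟨hs0, hsτ⟩ t ht
    rcases hsτ.lt_or_eq with hsτ | rfl
    · exact hsmall s ⟨hs0, hsτ⟩ t
    · have := hshift 1 0 t
      rw [Int.cast_one, zero_add, one_mul, zpow_one, hsmall 0 ⟨le_rfl, hτ⟩ t] at this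
      rw [this, hg 0 ⟨le_rfl, hτ.le⟩ t ht, zero_add]
  have hstrip : ∀ s ∈ Icc 0 (2 * τ), ∀ t : ℝ, 0 ≤ t → Ψ s t = ψ s t := by
    intro s ⟨hs0, hs2⟩ t ht
    rcases le_total s τ with hsτ | hτs
    · exact hleft s ⟨hs0, hsτ⟩ t ht
    · have := hshift 1 (s - τ) t
      rw [Int.cast_one, one_mul, sub_add_cancel, zpow_one,
        hleft (s - τ) ⟨by linarith, by linarith⟩ t ht] at this
      rw [this, hg (s - τ) ⟨by linarith, by linarith⟩ t ht, sub_add_cancel]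
  refine ⟨Ψ, hstrip, fun s₁ => ?_⟩
  set n := ⌊s₁ / τ⌋
  have hn₁ : n * τ ≤ s₁ := (le_div_iff₀ hτ).1 (Int.floor_le _)
  have hn₂ : s₁ < n * τ + τ := by
    have := (div_lt_iff₀ hτ).1 (Int.lt_floor_add_one (s₁ / τ))
    linarith
  have hmem : ∀ s ∈ Icc s₁ (s₁ + τ), s - n * τ ∈ Icc 0 (2 * τ) := fun s hs =>
    ⟨by linarith [hs.1], by linarith [hs.2]⟩
  have hΨ : ∀ s ∈ Icc s₁ (s₁ + τ), ∀ t : ℝ, 0 ≤ t → Ψ s t = (g ^ n) (ψ (s - n * τ) t) :=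
    fun s hs t ht => by rw [← hstrip _ (hmem s hs) t ht, ← hshift, sub_add_cancel]
  intro s hs s' hs' t ht t' ht'
  rw [hΨ s hs t ht, hΨ s' hs' t' ht', IsometryEquiv.dist_eq,
    hψ _ (hmem s hs) _ (hmem s' hs') t ht t' ht', sub_sub_sub_cancel_right]

end Gluing

lemma CAT0Space.isFlatOn_univ {Y E : Type*} [MetricSpace Y] [NormedAddCommGroup E]
    [NormedSpace ℝ E] (hY : CAT0Space Y) {Ψ : ℝ → ℝ → Y} {w v : E} {τ : ℝ} (hτ : 0 < τ)
    (h : ∀ s₁ : ℝ, IsFlatOn Ψ w v (Icc s₁ (s₁ + τ))) : IsFlatOn Ψ w v univ := by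
  intro s _ s' _ t ht t' ht'
  have hpath := hY.dist_eq_of_locally_dist_eq
    (f := fun c => Ψ (s + c * (s' - s)) (t + c * (t' - t)))
    (L := ‖(s - s') • w + (t - t') • v‖) (r := τ / (|s' - s| + 1)) (by positivity) ?_
  · simpa using hpath
  intro a ha b hb hab
  have hnonneg : ∀ c ∈ Icc (0 : ℝ) 1, 0 ≤ t + c * (t' - t) := fun c hc => by
    nlinarith [hc.1, hc.2]
  have hclose : |(s + a * (s' - s)) - (s + b * (s' - s))| ≤ τ := by
    rw [add_sub_add_left_eq_sub, ← sub_mul, abs_mul]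
    calc |a - b| * |s' - s| ≤ τ / (|s' - s| + 1) * (|s' - s| + 1) := by
          gcongr
          linarith
      _ = τ := div_mul_cancel₀ _ (by positivity)
  rw [dist_eq_of_isFlatOn_Icc_add h hclose (hnonneg a ha) (hnonneg b hb),
    show (s + a * (s' - s) - (s + b * (s' - s))) • w + (t + a * (t' - t) - (t + b * (t' - t))) • v
      = (b - a) • ((s - s') • w + (t - t') • v) by module,
    norm_smul, Real.norm_eq_abs, abs_sub_comm]

lemma exists_perp_unit_decomposition {w v : EuclideanSpace ℝ (Fin 2)} (hw : ‖w‖ = 1)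
    (hv : ‖v‖ = 1) (hvw : v ≠ w) (hvnw : v ≠ -w) :
    ∃ (p : EuclideanSpace ℝ (Fin 2)) (α β : ℝ),
      (∀ x y : ℝ, ‖x • w + y • p‖ = √(x ^ 2 + y ^ 2)) ∧ v = α • w + β • p ∧ β ≠ 0 := by
  have hnorm : ∀ x : EuclideanSpace ℝ (Fin 2), ‖x‖ = √(x 0 ^ 2 + x 1 ^ 2) := fun x => by
    simp [EuclideanSpace.norm_eq, Fin.sum_univ_two]
  have hw2 : w 0 ^ 2 + w 1 ^ 2 = 1 := Real.sqrt_eq_one.1 (hnorm w ▸ hw)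
  set p : EuclideanSpace ℝ (Fin 2) := (WithLp.equiv 2 (Fin 2 → ℝ)).symm ![-w 1, w 0]
  have hp : ∀ x y : ℝ, ‖x • w + y • p‖ = √(x ^ 2 + y ^ 2) := fun x y => by
    rw [hnorm]
    congr 1
    simp only [WithLp.equiv_symm_apply, PiLp.add_apply, PiLp.smul_apply, smul_eq_mul,
      Matrix.cons_val_zero, Matrix.cons_val_one, Matrix.cons_val_fin_one, mul_neg, p]
    linear_combination (x ^ 2 + y ^ 2) * hw2
  set α := v 0 * w 0 + v 1 * w 1
  set β := v 1 * w 0 - v 0 * w 1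
  have hvαβ : v = α • w + β • p := by
    ext i
    fin_cases i
    · simp only [Fin.zero_eta, WithLp.equiv_symm_apply, PiLp.add_apply, PiLp.smul_apply,
        smul_eq_mul, Matrix.cons_val_zero, mul_neg, α, β, p]
      linear_combination (-v 0) * hw2
    · simp only [Fin.mk_one, WithLp.equiv_symm_apply, PiLp.add_apply, PiLp.smul_apply,
        smul_eq_mul, Matrix.cons_val_one, Matrix.cons_val_fin_one, α, β, p]
      linear_combination (-v 1) * hw2
  refine ⟨p, α, β, hp, hvαβ, fun hβ => ?_⟩
  rw [hβ, zero_smul, add_zero] at hvαβ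
  have hα : |α| = 1 := by rw [← hv, hvαβ, norm_smul, hw, mul_one, Real.norm_eq_abs]
  rcases abs_eq zero_le_one |>.1 hα with hα | hα
  · exact hvw (by rw [hvαβ, hα, one_smul])
  · exact hvnw (by rw [hvαβ, hα, neg_one_smul])

lemma exists_halfPlane_coords {w v : EuclideanSpace ℝ (Fin 2)} (hw : ‖w‖ = 1) (hv : ‖v‖ = 1)
    (hvw : v ≠ w) (hvnw : v ≠ -w) :
    ∃ σ θ : EuclideanSpace ℝ (Fin 2) → ℝ,
      (∀ u u', ‖(σ u - σ u') • w + (θ u - θ u') • v‖ = dist u u') ∧ (∀ u, 0 ≤ u 1 → 0 ≤ θ u) ∧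
      ∀ x : ℝ, σ ((WithLp.equiv 2 (Fin 2 → ℝ)).symm ![x, 0]) = x ∧
        θ ((WithLp.equiv 2 (Fin 2 → ℝ)).symm ![x, 0]) = 0 := by
  obtain ⟨p, α, β, hp, hvαβ, hβ⟩ := exists_perp_unit_decomposition hw hv hvw hvnw
  refine ⟨fun u => u 0 - u 1 * (α / |β|), fun u => u 1 / |β|, fun u u' => ?_,
    fun u hu => div_nonneg hu (abs_nonneg β), fun x => by simp⟩
  rw [hvαβ, show ∀ a b : ℝ, a • w + b • (α • w + β • p) = (a + b * α) • w + (b * β) • p by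
    intros; module, hp, EuclideanSpace.dist_eq, Fin.sum_univ_two]
  congr 1
  have hβ2 : |β| ^ 2 = β ^ 2 := sq_abs β
  have hβ0 : |β| ≠ 0 := abs_ne_zero.2 hβ
  simp only [Real.dist_eq, sq_abs]
  field_simp
  linear_combination (-(u 1 - u' 1) ^ 2) * hβ2

lemma IsFlatOn.comp_sub_const {Y E : Type*} [MetricSpace Y] [NormedAddCommGroup E]
    [NormedSpace ℝ E] {Ψ : ℝ → ℝ → Y} {w v : E} (h : IsFlatOn Ψ w v univ) (a : ℝ) :
    IsFlatOn (fun s t => Ψ (s - a) t) w v univ := fun s _ s' _ t ht t' ht' => by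
  simpa using h (s - a) trivial (s' - a) trivial t ht t' ht'

theorem flatHalfPlaneAlong_of_isFlatOn_univ {Y : Type*} [MetricSpace Y] {c : ℝ → Y}
    {Ψ : ℝ → ℝ → Y} {w v : EuclideanSpace ℝ (Fin 2)} (hw : ‖w‖ = 1) (hv : ‖v‖ = 1)
    (hvw : v ≠ w) (hvnw : v ≠ -w) (hΨ : IsFlatOn Ψ w v univ) {t₀ ε : ℝ} (hε : 0 < ε)
    (hc : ∀ s, |s - t₀| ≤ ε → Ψ s 0 = c s) : FlatHalfPlaneAlong c t₀ := by
  obtain ⟨σ, θ, hσθ, hθ, hbot⟩ := exists_halfPlane_coords hw hv hvw hvnw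
  refine ⟨ε, fun u => Ψ (σ u) (θ u), hε, fun u u' hu hu' => ?_, fun s hs => ?_⟩
  · rw [hΨ _ trivial _ trivial _ (hθ u hu) _ (hθ u' hu'), hσθ]
  · beta_reduce
    rw [(hbot s).1, (hbot s).2, hc s hs]

lemma IsGeodRay.comp_isometry {Y Z : Type*} [MetricSpace Y] [MetricSpace Z] {γ : ℝ → Y}
    (hγ : IsGeodRay γ) {f : Y → Z} (hf : Isometry f) : IsGeodRay (f ∘ γ) :=
  fun s t hs ht => by rw [Function.comp_apply, Function.comp_apply, hf.dist_eq, hγ s t hs ht]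

section FlatStripOnAxis
variable {Y E : Type*} [MetricSpace Y] [NormedAddCommGroup E] [NormedSpace ℝ E]
  {ψ : ℝ → ℝ → Y} {w v : E} {I : Set ℝ}

lemma IsFlatOn.dist_eq_abs_sub_left (hψ : IsFlatOn ψ w v I) (hw : ‖w‖ = 1) {s s' t : ℝ}
    (hs : s ∈ I) (hs' : s' ∈ I) (ht : 0 ≤ t) : dist (ψ s t) (ψ s' t) = |s - s'| := by
  rw [hψ s hs s' hs' t ht t ht, sub_self, zero_smul, add_zero, norm_smul, hw, mul_one,
    Real.norm_eq_abs]

lemma IsFlatOn.dist_eq_abs_sub_right (hψ : IsFlatOn ψ w v I) (hv : ‖v‖ = 1) {s t t' : ℝ}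
    (hs : s ∈ I) (ht : 0 ≤ t) (ht' : 0 ≤ t') : dist (ψ s t) (ψ s t') = |t - t'| := by
  rw [hψ s hs s hs t ht t' ht', sub_self, zero_smul, zero_add, norm_smul, hv, mul_one,
    Real.norm_eq_abs]

variable {g : Y ≃ᵢ Y} {c γ : ℝ → Y} {τ s₀ : ℝ}

lemma IsFlatOn.eq_axis (hY : CAT0Space Y) (hc : IsGeodLine c) (hτ : 0 < τ)
    (hψ : IsFlatOn ψ w v (Icc 0 (2 * τ))) (hw : ‖w‖ = 1) (hψ0 : ψ 0 0 = c s₀)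
    (hψ2 : ψ (2 * τ) 0 = c (s₀ + 2 * τ)) : ∀ s ∈ Icc 0 (2 * τ), ψ s 0 = c (s₀ + s) := by
  intro s hs
  have h0 : (0 : ℝ) ∈ Icc 0 (2 * τ) := ⟨le_rfl, by linarith⟩
  have h2 : 2 * τ ∈ Icc 0 (2 * τ) := ⟨by linarith, le_rfl⟩
  have hxp : dist (c s₀) (ψ s 0) = s := by
    rw [← hψ0, hψ.dist_eq_abs_sub_left hw h0 hs le_rfl, zero_sub, abs_neg, abs_of_nonneg hs.1]
  have hpz : dist (ψ s 0) (c (s₀ + 2 * τ)) = 2 * τ - s := by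
    rw [← hψ2, hψ.dist_eq_abs_sub_left hw hs h2 le_rfl, abs_of_nonpos (by linarith [hs.2]),
      neg_sub]
  refine hY.eq_of_dist_add_dist_eq (x := c s₀) (z := c (s₀ + 2 * τ)) ?_ ?_ ?_
  · rw [hxp, hpz, hc, sub_add_cancel_left, abs_neg, abs_of_pos (by linarith)]
    ring
  · rw [hxp, hc, sub_add_cancel_left, abs_neg, abs_of_nonneg hs.1]
  · rw [hpz, hc, add_sub_add_left_eq_sub, abs_of_nonpos (by linarith [hs.2]), neg_sub]

lemma IsFlatOn.eq_isometry_apply (hY : CAT0Space Y) (hτ : 0 < τ)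
    (hψ : IsFlatOn ψ w v (Icc 0 (2 * τ))) (hw : ‖w‖ = 1) (hv : ‖v‖ = 1) (hγ : IsGeodRay γ)
    (hψγ : ∀ t : ℝ, 0 ≤ t → ψ 0 t = γ t) (hτ0 : ψ τ 0 = g (γ 0)) {C : ℝ}
    (hC : ∀ t : ℝ, 0 ≤ t → dist (γ t) (g (γ t)) ≤ C) : ∀ t : ℝ, 0 ≤ t → ψ τ t = g (γ t) := by
  have h0 : (0 : ℝ) ∈ Icc 0 (2 * τ) := ⟨le_rfl, by linarith⟩
  have hτI : τ ∈ Icc 0 (2 * τ) := ⟨hτ.le, by linarith⟩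
  refine hY.eq_of_isGeodRay_of_dist_le (α := ψ τ) (β := g ∘ γ)
    (fun s t hs ht => hψ.dist_eq_abs_sub_right hv hτI hs ht) (hγ.comp_isometry g.isometry) hτ0
    (C := τ + C) fun t ht => ?_
  calc dist (ψ τ t) (g (γ t)) ≤ dist (ψ τ t) (ψ 0 t) + dist (ψ 0 t) (g (γ t)) :=
        dist_triangle _ _ _
    _ ≤ τ + C := by
        rw [hψ.dist_eq_abs_sub_left hw hτI h0 ht, sub_zero, abs_of_pos hτ, hψγ t ht]
        linarith [hC t ht]

lemma IsFlatOn.isometry_apply_eq (hY : CAT0Space Y) (hτ : 0 < τ)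
    (hψ : IsFlatOn ψ w v (Icc 0 (2 * τ))) (hw : ‖w‖ = 1) (hψγ : ∀ t : ℝ, 0 ≤ t → ψ 0 t = γ t)
    (hψτ : ∀ t : ℝ, 0 ≤ t → ψ τ t = g (γ t)) (hψ2 : ∀ t : ℝ, 0 ≤ t → ψ (2 * τ) t = g (g (γ t))) :
    ∀ s ∈ Icc 0 τ, ∀ t : ℝ, 0 ≤ t → g (ψ s t) = ψ (s + τ) t := by
  intro s hs t ht
  have hsI : s ∈ Icc 0 (2 * τ) := ⟨hs.1, by linarith [hs.2]⟩
  have hsτI : s + τ ∈ Icc 0 (2 * τ) := ⟨by linarith [hs.1], by linarith [hs.2]⟩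
  have h0 : (0 : ℝ) ∈ Icc 0 (2 * τ) := ⟨le_rfl, by linarith⟩
  have hτI : τ ∈ Icc 0 (2 * τ) := ⟨hτ.le, by linarith⟩
  have h2 : 2 * τ ∈ Icc 0 (2 * τ) := ⟨by linarith, le_rfl⟩
  have hdist := fun {a b} (ha : a ∈ Icc 0 (2 * τ)) (hb : b ∈ Icc 0 (2 * τ)) =>
    hψ.dist_eq_abs_sub_left hw ha hb ht
  have hx : g (ψ 0 t) = ψ τ t := by rw [hψγ t ht, hψτ t ht]
  have hz : g (ψ τ t) = ψ (2 * τ) t := by rw [hψτ t ht, hψ2 t ht]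
  symm
  apply hY.eq_of_dist_add_dist_eq (x := ψ τ t) (z := ψ (2 * τ) t)
  · rw [hdist hτI hsτI, hdist hsτI h2, hdist hτI h2, show τ - (s + τ) = -s by ring,
      show s + τ - 2 * τ = -(τ - s) by ring, show τ - 2 * τ = -τ by ring, abs_neg, abs_neg,
      abs_neg, abs_of_nonneg hs.1, abs_of_nonneg (by linarith [hs.2]), abs_of_pos hτ]
    ring
  · rw [← hx, g.dist_eq, hdist h0 hsI, hx, hdist hτI hsτI]
    congr 1
    ring
  · rw [hdist hsτI h2, ← hz, g.dist_eq, hdist hsI hτI]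
    congr 1
    ring

lemma IsFlatOn.ne_and_ne_neg (hτ : 0 < τ) (hψ : IsFlatOn ψ w v (Icc 0 (2 * τ)))
    (haxis : ∀ t : ℝ, g (c t) = c (t + τ)) (hs₀ : γ 0 = c s₀)
    (hψγ : ∀ t : ℝ, 0 ≤ t → ψ 0 t = γ t) (hψτ : ∀ t : ℝ, 0 ≤ t → ψ τ t = g (γ t))
    (hψc : ∀ s ∈ Icc 0 (2 * τ), ψ s 0 = c (s₀ + s))
    (hmeet : ∀ t : ℝ, 0 ≤ t → γ t ∈ range c → t = 0) : v ≠ w ∧ v ≠ -w := by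
  have h0 : (0 : ℝ) ∈ Icc 0 (2 * τ) := ⟨le_rfl, by linarith⟩
  have hτI : τ ∈ Icc 0 (2 * τ) := ⟨hτ.le, by linarith⟩
  constructor
  · intro hvw
    have hγτ : γ τ = c (s₀ + τ) := by
      rw [← hψγ τ hτ.le, ← hψc τ hτI, ← dist_eq_zero, hψ 0 h0 τ hτI τ hτ.le 0 le_rfl, hvw,
        show (0 - τ) • w + (τ - 0) • w = 0 by module, norm_zero]
    exact hτ.ne' (hmeet τ hτ.le ⟨_, hγτ.symm⟩)
  · intro hvw
    have hgγτ : g (γ τ) = g (c (s₀ - τ)) := by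
      rw [haxis, sub_add_cancel, ← hs₀, ← hψγ 0 le_rfl, ← hψτ τ hτ.le, ← dist_eq_zero,
        hψ τ hτI 0 h0 τ hτ.le 0 le_rfl, hvw, show (τ - 0) • w + (τ - 0) • -w = 0 by module,
        norm_zero]
    exact hτ.ne' (hmeet τ hτ.le ⟨_, (g.injective hgγτ).symm⟩)

end FlatStripOnAxis

theorem stmt5_general {Y : Type*} [MetricSpace Y] [CompleteSpace Y] (hY : CAT0Space Y)
    (g : Y ≃ᵢ Y) (c : ℝ → Y) (hc : IsGeodLine c)
    (τ : ℝ) (hτ : 0 < τ) (haxis : ∀ t : ℝ, g (c t) = c (t + τ))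
    (hangle : ∀ t₀ : ℝ, ¬ FlatHalfPlaneAlong c t₀)
    (γ : ℝ → Y) (hγ : IsGeodRay γ)
    (hstart : γ 0 ∈ Set.range c)
    (hmeet : ∀ t : ℝ, 0 ≤ t → γ t ∈ Set.range c → t = 0)
    (hfixed : ∃ C : ℝ, ∀ t : ℝ, 0 ≤ t → dist (γ t) (g (γ t)) ≤ C)
    (hflat : ∃ φ : Y → EuclideanSpace ℝ (Fin 2),
      ∀ p ∈ geoHull (γ '' Set.Ici (0:ℝ) ∪ (g ∘ g) '' (γ '' Set.Ici (0:ℝ))),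
        ∀ q ∈ geoHull (γ '' Set.Ici (0:ℝ) ∪ (g ∘ g) '' (γ '' Set.Ici (0:ℝ))),
          dist (φ p) (φ q) = dist p q) :
    False := by
  obtain ⟨s₀, hs₀⟩ := hstart
  obtain ⟨C, hC⟩ := hfixed
  obtain ⟨φ, hφ⟩ := hflat
  have hgg : ∀ t, g (g (c t)) = c (t + 2 * τ) := fun t => by rw [haxis, haxis, add_assoc, two_mul]
  have hL : dist (γ 0) (g (g (γ 0))) = 2 * τ := by
    rw [← hs₀, hgg, hc, sub_add_cancel_left, abs_neg, abs_of_pos (by linarith)]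
  obtain ⟨w, v, ψ, hw, hv, hψ, hψγ, hψgg⟩ := exists_isFlatOn_of_isometric_on_hull hY
    (geoConvex_geoHull _) hφ (ρ := fun t => g (g (γ t))) hγ
    (hγ.comp_isometry (g.isometry.comp g.isometry))
    (fun t ht => subset_geoHull _ (Or.inl ⟨t, ht, rfl⟩))
    (fun t ht => subset_geoHull _ (Or.inr ⟨γ t, ⟨t, ht, rfl⟩, rfl⟩)) (C := 2 * C)
    (fun t ht => (dist_triangle _ (g (γ t)) _).trans (by rw [g.dist_eq]; linarith [hC t ht]))
    (dist_pos.1 (by linarith [hL]))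
  rw [hL] at hψ hψgg
  have hψc := hψ.eq_axis hY hc hτ hw (by rw [hψγ 0 le_rfl, hs₀])
    (by rw [hψgg 0 le_rfl, ← hs₀, hgg])
  have hψτ := hψ.eq_isometry_apply hY hτ hw hv hγ hψγ
    (by rw [hψc τ ⟨hτ.le, by linarith⟩, ← hs₀, haxis]) hC
  obtain ⟨hvw, hvnw⟩ := hψ.ne_and_ne_neg hτ haxis hs₀.symm hψγ hψτ hψc hmeet
  obtain ⟨Ψ, hΨψ, hΨ⟩ :=
    exists_isFlatOn_Icc_add g hτ hψ (hψ.isometry_apply_eq hY hτ hw hψγ hψτ hψgg)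
  refine hangle (s₀ + τ) (flatHalfPlaneAlong_of_isFlatOn_univ hw hv hvw hvnw
    ((hY.isFlatOn_univ hτ hΨ).comp_sub_const s₀) hτ fun s hs => ?_)
  obtain ⟨h₁, h₂⟩ := abs_sub_le_iff.1 hs
  have hsI : s - s₀ ∈ Icc 0 (2 * τ) := ⟨by linarith, by linarith⟩
  rw [hΨψ _ hsI 0 le_rfl, hψc _ hsI, add_sub_cancel]

/-- let `g` be an isometry of a complete CAT(0) space with an axis `c = Λ_g`
(on which `g` acts as a translation) which admits no flat half-plane neighborhood (the
angle condition: consecutive sides of the axis make angle `> π`).  If `z ∈ ∂Y ∖ {g^{±∞}}`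
(represented by a ray `γ` which starts on `Λ_g`, meets `Λ_g` exactly once, and does not
stay at bounded distance from `Λ_g`) is fixed by `g` (i.e. `gγ` is asymptotic to `γ`) and
the convex hull of `γ ∪ g²γ` isometrically embeds in the Euclidean plane, then a
contradiction arises; hence the only boundary points fixed by `g` are `g^{±∞}`. -/
theorem stmt5 {Y : Type*} [MetricSpace Y] [CompleteSpace Y] (hY : CAT0Space Y)
    (g : Y ≃ᵢ Y) (c : ℝ → Y) (hc : IsGeodLine c)
    (τ : ℝ) (hτ : 0 < τ) (haxis : ∀ t : ℝ, g (c t) = c (t + τ))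
    (hangle : ∀ t₀ : ℝ, ¬ FlatHalfPlaneAlong c t₀)
    (γ : ℝ → Y) (hγ : IsGeodRay γ)
    (hstart : γ 0 ∈ Set.range c)
    (hmeet : ∀ t : ℝ, 0 ≤ t → γ t ∈ Set.range c → t = 0)
    (hnotaxisend : ¬ ∃ C : ℝ, ∀ t : ℝ, 0 ≤ t → Metric.infDist (γ t) (Set.range c) ≤ C)
    (hfixed : ∃ C : ℝ, ∀ t : ℝ, 0 ≤ t → dist (γ t) (g (γ t)) ≤ C)
    (hflat : ∃ φ : Y → EuclideanSpace ℝ (Fin 2),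
      ∀ p ∈ geoHull (γ '' Set.Ici (0:ℝ) ∪ (g ∘ g) '' (γ '' Set.Ici (0:ℝ))),
        ∀ q ∈ geoHull (γ '' Set.Ici (0:ℝ) ∪ (g ∘ g) '' (γ '' Set.Ici (0:ℝ))),
          dist (φ p) (φ q) = dist p q) :
    False :=
  stmt5_general hY g c hc τ hτ haxis hangle γ hγ hstart hmeet hfixed hflat
end

section
/- Let h₁ ⊂ h₂ be a nested pair of strongly separated halfspaces in a finite-dimensional CAT(0) cube complex, with bridge b(ĥ₁, ĥ₂) equal to the interval I(x₁, x₂) between the gates x₁ ∈ h₁, x₂ ∈ h₂*. Then for any vertices y₁ ∈ h₁ and y₂ ∈ h₂*, one has d(y₁, y₂) = d(y₁, x₁) + d(x₁, x₂) + d(x₂, y₂). -/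
private lemma CCC.sep_eq_zero (X : CCC) (a b : X.V) (h : X.cdist a b = 0) : a = b := by
  apply X.eq_of_notsep
  intro w
  by_contra hw
  have hne : {h : X.H | X.side h a ≠ X.side h b}.Nonempty := ⟨w, hw⟩
  have hpos := (Set.ncard_pos (X.finsep a b)).mpr hne
  have h' : {h : X.H | X.side h a ≠ X.side h b}.ncard = 0 := h
  omega

private lemma CCC.dist_split (X : CCC) (a b c : X.V)
    (hd : ∀ h : X.H, X.side h a ≠ X.side h b → X.side h b = X.side h c) :
    X.cdist a c = X.cdist a b + X.cdist b c := by
  have hset : {h : X.H | X.Separates h a c}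
      = {h : X.H | X.Separates h a b} ∪ {h : X.H | X.Separates h b c} := by
    ext h
    simp only [Set.mem_setOf_eq, Set.mem_union, CCC.Separates]
    constructor
    · intro hac
      by_cases hab : X.side h a = X.side h b
      · right; rw [hab] at hac; exact hac
      · left; exact hab
    · rintro (hab | hbc)
      · have hbc := hd h hab
        intro hac; exact hab (hac.trans hbc.symm)
      · by_cases hab : X.side h a = X.side h b
        · intro hac; exact hbc (hab ▸ hac)
        · exact absurd (hd h hab) hbc
  have hdisj : Disjoint {h : X.H | X.Separates h a b} {h : X.H | X.Separates h b c} := by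
    rw [Set.disjoint_left]
    intro h hab hbc
    exact hbc (hd h hab)
  rw [CCC.cdist, CCC.cdist, CCC.cdist, hset,
    Set.ncard_union_eq hdisj (X.finsep a b) (X.finsep b c)]


/-- distance formula across the bridge of a strongly separated nested pair of
halfspaces: for the gates `x₁ ∈ h₁`, `x₂ ∈ h₂*` (the unique pair minimizing the distance
between `h₁` and `h₂*`) and any `y₁ ∈ h₁`, `y₂ ∈ h₂*`,
`d(y₁,y₂) = d(y₁,x₁) + d(x₁,x₂) + d(x₂,y₂)`. -/
theorem stmt6 (X : CCC) (hfd : X.FiniteDim) (h₁ h₂ : X.H) (b₁ b₂ : Bool)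
    (hnest : X.hs h₁ b₁ ⊆ X.hs h₂ b₂) (hss : X.StronglySeparated h₁ h₂)
    (x₁ x₂ : X.V) (hx₁ : x₁ ∈ X.hs h₁ b₁) (hx₂ : x₂ ∈ X.hs h₂ (!b₂))
    (hmin : ∀ y₁ ∈ X.hs h₁ b₁, ∀ y₂ ∈ X.hs h₂ (!b₂), X.cdist x₁ x₂ ≤ X.cdist y₁ y₂)
    (huniq : ∀ z₁ ∈ X.hs h₁ b₁, ∀ z₂ ∈ X.hs h₂ (!b₂),
      X.cdist z₁ z₂ = X.cdist x₁ x₂ → z₁ = x₁ ∧ z₂ = x₂) :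
    ∀ y₁ ∈ X.hs h₁ b₁, ∀ y₂ ∈ X.hs h₂ (!b₂),
      X.cdist y₁ y₂ = X.cdist y₁ x₁ + X.cdist x₁ x₂ + X.cdist x₂ y₂ := by
  intro y₁ hy₁ y₂ hy₂
  have bne : ∀ a b c : Bool, a ≠ b → b ≠ c → a = c := by decide
  have bnot : ∀ b : Bool, b ≠ !b := by decide
  have bnn : ∀ a b : Bool, a ≠ !b → a = b := by decide
  have bcase : ∀ a b : Bool, a = b ∨ a = !b := by decide
  have hx₁' : X.side h₁ x₁ = b₁ := hx₁
  have hx₂' : X.side h₂ x₂ = !b₂ := hx₂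
  have hy₁' : X.side h₁ y₁ = b₁ := hy₁
  have hy₂' : X.side h₂ y₂ = !b₂ := hy₂
  have hnest' : ∀ v : X.V, X.side h₂ v = !b₂ → X.side h₁ v = !b₁ := by
    intro v hv
    by_contra hcon
    have h1 : X.side h₁ v = b₁ := bnn _ _ hcon
    have h2 : X.side h₂ v = b₂ := hnest h1
    rw [hv] at h2
    exact bnot b₂ h2.symm
  -- Claim 1: no wall separates both (y₁,x₁) and (x₁,x₂)
  have claim1 : ∀ h : X.H, X.side h y₁ ≠ X.side h x₁ → X.side h x₁ = X.side h x₂ := by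
    have hmside : X.side h₁ (X.median y₁ x₁ x₂) = b₁ := by
      rw [(X.median_spec y₁ x₁ x₂ h₁).1 (hy₁'.trans hx₁'.symm), hy₁']
    have hsplit : X.cdist x₁ x₂
        = X.cdist x₁ (X.median y₁ x₁ x₂) + X.cdist (X.median y₁ x₁ x₂) x₂ :=
      X.dist_split _ _ _ (by
        intro h hsep
        by_contra hmx₂
        exact hsep ((X.median_spec y₁ x₁ x₂ h).2.1 (bne _ _ _ hsep hmx₂)).symm)
    have hle := hmin _ hmside x₂ hx₂
    have hz : X.cdist x₁ (X.median y₁ x₁ x₂) = 0 := by omega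
    have hmx : x₁ = X.median y₁ x₁ x₂ := X.sep_eq_zero _ _ hz
    intro h hsep
    by_contra hx12
    have h13 : X.side h y₁ = X.side h x₂ := bne _ _ _ hsep hx12
    have hthis := (X.median_spec y₁ x₁ x₂ h).2.2 h13
    rw [← hmx] at hthis
    exact hsep hthis.symm
  -- Claim 2: no wall separates both (x₁,x₂) and (x₂,y₂)
  have claim2 : ∀ h : X.H, X.side h x₁ ≠ X.side h x₂ → X.side h x₂ = X.side h y₂ := by
    have hmside : X.side h₂ (X.median x₁ x₂ y₂) = !b₂ := by
      rw [(X.median_spec x₁ x₂ y₂ h₂).2.1 (hx₂'.trans hy₂'.symm), hx₂']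
    have hsplit : X.cdist x₁ x₂
        = X.cdist x₁ (X.median x₁ x₂ y₂) + X.cdist (X.median x₁ x₂ y₂) x₂ :=
      X.dist_split _ _ _ (by
        intro h hsep
        by_contra hmx₂
        exact hsep ((X.median_spec x₁ x₂ y₂ h).1 (bne _ _ _ hsep hmx₂)).symm)
    have hle := hmin x₁ hx₁ _ hmside
    have hz : X.cdist (X.median x₁ x₂ y₂) x₂ = 0 := by omega
    have hmx : X.median x₁ x₂ y₂ = x₂ := X.sep_eq_zero _ _ hz
    intro h hsep
    by_contra hx2y
    have h13 : X.side h x₁ = X.side h y₂ := bne _ _ _ hsep hx2y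
    have hthis := (X.median_spec x₁ x₂ y₂ h).2.2 h13
    rw [hmx] at hthis
    exact hsep hthis.symm
  -- Claim 3: no wall separates both (y₁,x₁) and (x₂,y₂)
  have claim3 : ∀ h : X.H, X.side h y₁ ≠ X.side h x₁ → X.side h x₂ = X.side h y₂ := by
    intro w hw1
    by_contra hw2
    apply hss.2.2 w
    have pick : ∀ u v : X.V, X.side w u ≠ X.side w v → ∀ a : Bool,
        X.side w u = a ∨ X.side w v = a := by
      intro u v huv a
      by_cases hua : X.side w u = a
      · exact Or.inl hua
      · exact Or.inr (bne _ _ _ (Ne.symm huv) hua)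
    constructor
    · intro a b
      rcases bcase b b₁ with hb | hb
      · subst hb
        rcases pick y₁ x₁ hw1 a with ha | ha
        · exact ⟨y₁, ha, hy₁'⟩
        · exact ⟨x₁, ha, hx₁'⟩
      · subst hb
        rcases pick x₂ y₂ hw2 a with ha | ha
        · exact ⟨x₂, ha, hnest' x₂ hx₂'⟩
        · exact ⟨y₂, ha, hnest' y₂ hy₂'⟩
    · intro a b
      rcases bcase b b₂ with hb | hb
      · subst hb
        rcases pick y₁ x₁ hw1 a with ha | ha
        · exact ⟨y₁, ha, hnest hy₁⟩
        · exact ⟨x₁, ha, hnest hx₁⟩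
      · subst hb
        rcases pick x₂ y₂ hw2 a with ha | ha
        · exact ⟨x₂, ha, hx₂'⟩
        · exact ⟨y₂, ha, hy₂'⟩
  -- combine
  have step2 : X.cdist x₁ y₂ = X.cdist x₁ x₂ + X.cdist x₂ y₂ := X.dist_split x₁ x₂ y₂ claim2
  have step1 : X.cdist y₁ y₂ = X.cdist y₁ x₁ + X.cdist x₁ y₂ := by
    apply X.dist_split
    intro h hsep
    exact (claim1 h hsep).trans (claim3 h hsep)
  rw [step1, step2]
  omega
end

section
/- Let h₁ ⊂ h₂ be an über-separated pair of halfspaces in a CAT(0) cube complex, let x be a vertex in h₁ and y a vertex in h₂* (the complement of h₂). Then every combinatorial geodesic from x to y meets the bridge b(ĥ₁, ĥ₂). -/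
namespace CCC

/-- The (combinatorial) bridge between the hyperplanes of the halfspaces `(h₁,b₁)` and
`(h₂,b₂)`: the union of all geodesics between pairs `(x₁,x₂) ∈ h₁ × h₂*` minimizing the
distance between `h₁` and `h₂*`. -/
def Bridge (X : CCC) (h₁ h₂ : X.H) (b₁ b₂ : Bool) : Set X.V :=
  {z | ∃ x₁ ∈ X.hs h₁ b₁, ∃ x₂ ∈ X.hs h₂ (!b₂),
    (∀ y₁ ∈ X.hs h₁ b₁, ∀ y₂ ∈ X.hs h₂ (!b₂), X.cdist x₁ x₂ ≤ X.cdist y₁ y₂) ∧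
    z ∈ X.Interval x₁ x₂}

end CCC

/-!
Fix any `p ∈ h₁` and `q ∈ h₂*`. By strong separation no hyperplane has points of both `h₁`
and `h₂*` on each of its sides, so a hyperplane `m` not separating `p` from `q` contains `h₁` or
`h₂*` in the halfspace of `p` and `q`. Along a geodesic from `x ∈ h₁` to `y ∈ h₂*`, the
hyperplanes of the second kind are crossed before those of the first kind: otherwise some vertex
would lie beyond one of each, which über-separation rules out. Hence the last vertex of the
geodesic on the side of `q` of all hyperplanes of the first kind lies in the interval `[p, q]`;
for a distance-minimizing pair `(p, q)` this interval is contained in the bridge.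
-/

namespace CCC

variable {X : CCC}

theorem hs_not (h : X.H) (b : Bool) : X.hs h (!b) = (X.hs h b)ᶜ := by
  ext v
  exact Bool.eq_not

theorem mem_interval_iff {x y z : X.V} :
    z ∈ X.Interval x y ↔ ∀ m, X.side m x = X.side m y → X.side m z = X.side m x := by
  set A := {m | X.Separates m x z}
  set B := {m | X.Separates m z y}
  have hA : A.Finite := X.finsep x z
  have hB : B.Finite := X.finsep z y
  have hsep : {m | X.Separates m x y} = (A ∪ B) \ (A ∩ B) := by
    ext m
    simp only [Separates, A, B, Set.mem_ofPred_eq, Set.mem_sdiff, Set.mem_union, Set.mem_inter_iff]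
    cases X.side m x <;> cases X.side m y <;> cases X.side m z <;> decide
  have hinter : A ∩ B = ∅ ↔ ∀ m, X.side m x = X.side m y → X.side m z = X.side m x := by
    simp only [Set.eq_empty_iff_forall_notMem, Set.mem_inter_iff, Separates, A, B,
      Set.mem_ofPred_eq]
    refine forall_congr' fun m => ?_
    cases X.side m x <;> cases X.side m y <;> cases X.side m z <;> decide
  have hcard : X.cdist x y + 2 * (A ∩ B).ncard = X.cdist x z + X.cdist z y := by
    have hunion := Set.ncard_union_add_ncard_inter A B hA hB
    have hAB : A ∩ B ⊆ A ∪ B := Set.inter_subset_left.trans Set.subset_union_left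
    have hdiff := Set.ncard_sdiff hAB (hA.inter_of_left B)
    have hle := Set.ncard_le_ncard hAB (hA.union hB)
    rw [cdist, hsep, hdiff]
    change _ = A.ncard + B.ncard
    omega
  rw [← hinter, ← Set.ncard_eq_zero (hA.inter_of_left B)]
  change X.cdist x z + X.cdist z y = X.cdist x y ↔ _
  omega

section Splits

variable {m h : X.H} {S T : Set X.V}

def Splits (m : X.H) (S : Set X.V) : Prop := ∀ c, ∃ u ∈ S, X.side m u = c

theorem splits_of_ne {u v : X.V} (hu : u ∈ S) (hv : v ∈ S) (huv : X.side m u ≠ X.side m v) :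
    X.Splits m S := by
  intro c
  by_cases huc : X.side m u = c
  · exact ⟨u, hu, huc⟩
  · refine ⟨v, hv, ?_⟩
    revert huc huv
    cases X.side m u <;> cases X.side m v <;> cases c <;> decide

theorem Splits.mono (hS : X.Splits m S) (hST : S ⊆ T) : X.Splits m T :=
  fun c => (hS c).imp fun _ hu => ⟨hST hu.1, hu.2⟩

theorem subset_hs_of_not_splits (hS : ¬ X.Splits m S) {u : X.V} (hu : u ∈ S) :
    S ⊆ X.hs m (X.side m u) :=
  fun _ hv => by_contra fun hne => hS (splits_of_ne hu hv (Ne.symm hne))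

theorem crosses_iff_splits : X.Crosses m h ↔ ∀ b, X.Splits m (X.hs h b) :=
  ⟨fun H b c => (H c b).imp fun _ hv => ⟨hv.2, hv.1⟩,
    fun H a b => (H b a).imp fun _ hv => ⟨hv.2, hv.1⟩⟩

theorem crosses_of_splits {a : Bool} (ha : X.Splits m (X.hs h a))
    (hna : X.Splits m (X.hs h (!a))) : X.Crosses m h :=
  crosses_iff_splits.2 fun b => by rcases Bool.eq_or_eq_not b a with rfl | rfl <;> assumption

theorem hs_subset_of_not_crosses {a : Bool} {v : X.V} (hnc : ¬ X.Crosses m h)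
    (ha : X.Splits m (X.hs h a)) (hv : v ∉ X.hs h a) :
    X.hs m (!X.side m v) ⊆ X.hs h a := by
  have hna : ¬ X.Splits m (X.hs h (!a)) := fun hna => hnc (crosses_of_splits ha hna)
  have hsub := subset_hs_of_not_splits hna (by rwa [hs_not])
  rwa [hs_not, Set.compl_subset_comm, ← hs_not]

end Splits

section Geodesics

variable {γ : ℕ → X.V} {n i j k : ℕ}

theorem IsGeod.mem_interval (hγ : X.IsGeod γ n) (hij : i ≤ j) (hjk : j ≤ k) (hkn : k ≤ n) :
    γ j ∈ X.Interval (γ i) (γ k) := by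
  change X.cdist _ _ + X.cdist _ _ = X.cdist _ _
  rw [hγ i j hij (hjk.trans hkn), hγ j k hjk hkn, hγ i k (hij.trans hjk) hkn]
  omega

theorem IsGeod.side_eq (hγ : X.IsGeod γ n) (hij : i ≤ j) (hjk : j ≤ k) (hkn : k ≤ n)
    {m : X.H} (hm : X.side m (γ i) = X.side m (γ k)) : X.side m (γ j) = X.side m (γ i) :=
  mem_interval_iff.1 (hγ.mem_interval hij hjk hkn) m hm

theorem IsGeod.eq_of_separates_succ (hγ : X.IsGeod γ n) (hi : i < n) {m m' : X.H}
    (hm : X.Separates m (γ i) (γ (i + 1))) (hm' : X.Separates m' (γ i) (γ (i + 1))) :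
    m = m' := by
  have hstep : X.cdist (γ i) (γ (i + 1)) = 1 := by
    rw [hγ i (i + 1) i.le_succ hi]
    omega
  obtain ⟨a, ha⟩ := Set.ncard_eq_one.1 hstep
  have hma : m ∈ ({a} : Set X.H) := ha ▸ hm
  have hm'a : m' ∈ ({a} : Set X.H) := ha ▸ hm'
  exact hma.trans hm'a.symm

end Geodesics

theorem exists_cdist_le {A B : Set X.V} (hA : A.Nonempty) (hB : B.Nonempty) :
    ∃ p ∈ A, ∃ q ∈ B, ∀ u ∈ A, ∀ v ∈ B, X.cdist p q ≤ X.cdist u v := by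
  let f : X.V × X.V → ℕ := fun z => X.cdist z.1 z.2
  have hz := Function.argminOn_mem f (A ×ˢ B) (hA.prod hB)
  exact ⟨_, hz.1, _, hz.2, fun u hu v hv => Function.argminOn_le f _ (Set.mk_mem_prod hu hv)⟩

section Separation

variable {h₁ h₂ m m' : X.H} {b₁ b₂ : Bool}

theorem hs_not_subset_hs_not (hnest : X.hs h₁ b₁ ⊆ X.hs h₂ b₂) :
    X.hs h₂ (!b₂) ⊆ X.hs h₁ (!b₁) := by
  rw [hs_not, hs_not]
  exact Set.compl_subset_compl.2 hnest

theorem disjoint_hs_of_subset (hnest : X.hs h₁ b₁ ⊆ X.hs h₂ b₂) :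
    Disjoint (X.hs h₁ b₁) (X.hs h₂ (!b₂)) := by
  rw [hs_not]
  exact disjoint_compl_right.mono_left hnest

theorem StronglySeparated.not_splits_both (hss : X.StronglySeparated h₁ h₂)
    (hnest : X.hs h₁ b₁ ⊆ X.hs h₂ b₂) (hA : X.Splits m (X.hs h₁ b₁))
    (hB : X.Splits m (X.hs h₂ (!b₂))) : False :=
  hss.2.2 m ⟨crosses_of_splits hA (hB.mono (hs_not_subset_hs_not hnest)),
    crosses_of_splits (hA.mono hnest) hB⟩

theorem StronglySeparated.subset_or_subset (hss : X.StronglySeparated h₁ h₂)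
    (hnest : X.hs h₁ b₁ ⊆ X.hs h₂ b₂) {p q : X.V} (hp : p ∈ X.hs h₁ b₁)
    (hq : q ∈ X.hs h₂ (!b₂)) (hpq : X.side m p = X.side m q) :
    X.hs h₁ b₁ ⊆ X.hs m (X.side m p) ∨ X.hs h₂ (!b₂) ⊆ X.hs m (X.side m p) := by
  by_cases hA : X.Splits m (X.hs h₁ b₁)
  · right
    rw [hpq]
    exact subset_hs_of_not_splits (hss.not_splits_both hnest hA) hq
  · exact Or.inl (subset_hs_of_not_splits hA hp)

theorem UberSeparated.disjoint_hs (hub : X.UberSeparated h₁ h₂)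
    (hnest : X.hs h₁ b₁ ⊆ X.hs h₂ b₂) {c d : Bool} (hm : X.hs h₂ (!b₂) ⊆ X.hs m c)
    (hm' : X.hs h₁ b₁ ⊆ X.hs m' d) (hmA : X.Splits m (X.hs h₁ b₁))
    (hm'B : X.Splits m' (X.hs h₂ (!b₂))) :
    Disjoint (X.hs m (!c)) (X.hs m' (!d)) := by
  rw [Set.disjoint_left]
  intro u (hum : X.side m u = !c) (hum' : X.side m' u = !d)
  obtain ⟨x, hx, -⟩ := hmA c
  obtain ⟨y, hy, hym'⟩ := hm'B (!d)
  have hym : X.side m y = c := hm hy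
  by_cases hc₁ : X.Crosses m h₁
  · by_cases hc₂ : X.Crosses m' h₂
    · refine hub.2 m m' hc₁ hc₂ (crosses_of_splits (hmA.mono hm') ?_)
      exact splits_of_ne hum' hym' (by rw [hum, hym]; exact Bool.not_ne_self c)
    · have hsub := hs_subset_of_not_crosses hc₂ hm'B
        (Set.disjoint_left.1 (disjoint_hs_of_subset hnest) hx)
      rw [show X.side m' x = d from hm' hx] at hsub
      have : X.side m u = c := hm (hsub hum')
      exact Bool.not_ne_self c (hum.symm.trans this)
  · have hsub := hs_subset_of_not_crosses hc₁ hmA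
      (Set.disjoint_right.1 (disjoint_hs_of_subset hnest) hy)
    rw [hym] at hsub
    have : X.side m' u = d := hm' (hsub hum)
    exact Bool.not_ne_self d (hum'.symm.trans this)

theorem UberSeparated.side_geod_eq_of_subset (hub : X.UberSeparated h₁ h₂)
    (hnest : X.hs h₁ b₁ ⊆ X.hs h₂ b₂) {p q x y : X.V} (hp : p ∈ X.hs h₁ b₁)
    (hq : q ∈ X.hs h₂ (!b₂)) (hx : x ∈ X.hs h₁ b₁) (hy : y ∈ X.hs h₂ (!b₂))
    {γ : ℕ → X.V} {n i : ℕ} (hγ : X.IsGeod γ n) (h0 : γ 0 = x) (hn : γ n = y)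
    (hin : i ≤ n)
    (hi : ∀ k, X.hs h₁ b₁ ⊆ X.hs k (X.side k q) → X.side k (γ i) = X.side k q)
    (hsucc : i < n → ∃ k, X.hs h₁ b₁ ⊆ X.hs k (X.side k q) ∧
      X.side k (γ (i + 1)) ≠ X.side k q)
    (hm : X.hs h₂ (!b₂) ⊆ X.hs m (X.side m p)) :
    X.side m (γ i) = X.side m p := by
  by_contra hne
  have hlt : i < n := hin.lt_of_ne (by rintro rfl; exact hne (hn ▸ hm hy))
  obtain ⟨m', hm', hm'succ⟩ := hsucc hlt
  have hm'i := hi m' hm'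
  -- the step from `γ i` to `γ (i + 1)` crosses only `m'`, so `γ (i + 1)` is beyond both walls
  have hstay : X.side m (γ (i + 1)) = X.side m (γ i) := by
    by_contra hmove
    obtain rfl : m = m' := hγ.eq_of_separates_succ hlt (Ne.symm hmove) (by
      rw [Separates, hm'i]; exact Ne.symm hm'succ)
    exact hne (hm'i.trans (hm' hp).symm)
  have hxm : X.side m x ≠ X.side m p := fun hxp => hne <| by
    have hyp : X.side m y = X.side m p := hm hy
    have := hγ.side_eq i.zero_le hin le_rfl (m := m) (by rw [h0, hn, hxp, hyp])
    rwa [h0, hxp] at this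
  have hym' : X.side m' y ≠ X.side m' q := fun hyq => hm'succ <| by
    have hxq : X.side m' x = X.side m' q := hm' hx
    have := hγ.side_eq (i + 1).zero_le hlt le_rfl (m := m') (by rw [h0, hn, hxq, hyq])
    rwa [h0, hxq] at this
  have hdisj := hub.disjoint_hs hnest hm hm' (splits_of_ne hx hp hxm) (splits_of_ne hy hq hym')
  exact Set.disjoint_left.1 hdisj (show X.side m (γ (i + 1)) = !X.side m p by
    rw [hstay]; exact Bool.eq_not.2 hne) (Bool.eq_not.2 hm'succ)

theorem UberSeparated.exists_geod_mem_interval (hub : X.UberSeparated h₁ h₂)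
    (hnest : X.hs h₁ b₁ ⊆ X.hs h₂ b₂) {p q x y : X.V} (hp : p ∈ X.hs h₁ b₁)
    (hq : q ∈ X.hs h₂ (!b₂)) (hx : x ∈ X.hs h₁ b₁) (hy : y ∈ X.hs h₂ (!b₂))
    {γ : ℕ → X.V} {n : ℕ} (hγ : X.IsGeod γ n) (h0 : γ 0 = x) (hn : γ n = y) :
    ∃ i ≤ n, γ i ∈ X.Interval p q := by
  classical
  let P : ℕ → Prop := fun j =>
    ∀ m, X.hs h₁ b₁ ⊆ X.hs m (X.side m q) → X.side m (γ j) = X.side m q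
  have hP0 : P 0 := fun m hm => h0 ▸ hm hx
  set i := Nat.findGreatest P n
  have hin : i ≤ n := Nat.findGreatest_le n
  have hPi : P i := Nat.findGreatest_spec (Nat.zero_le n) hP0
  have hsucc : i < n → ¬ P (i + 1) := Nat.findGreatest_is_greatest i.lt_succ_self
  refine ⟨i, hin, mem_interval_iff.2 fun m hpq => ?_⟩
  rcases hub.1.subset_or_subset hnest hp hq hpq with hA | hB
  · exact (hPi m (hpq ▸ hA)).trans hpq.symm
  · refine hub.side_geod_eq_of_subset hnest hp hq hx hy hγ h0 hn hin hPi (fun hlt => ?_) hB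
    simpa [P] using hsucc hlt

end Separation

end CCC

/-- for an über-separated nested pair of halfspaces `h₁ ⊂ h₂`, every
combinatorial geodesic from a vertex of `h₁` to a vertex of `h₂*` meets the bridge. -/
theorem stmt10 (X : CCC) (h₁ h₂ : X.H) (b₁ b₂ : Bool)
    (hnest : X.hs h₁ b₁ ⊆ X.hs h₂ b₂) (huber : X.UberSeparated h₁ h₂)
    (x y : X.V) (hx : x ∈ X.hs h₁ b₁) (hy : y ∈ X.hs h₂ (!b₂))
    (γ : ℕ → X.V) (n : ℕ) (hγ : X.IsGeod γ n) (h0 : γ 0 = x) (hn : γ n = y) :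
    ∃ i ≤ n, γ i ∈ X.Bridge h₁ h₂ b₁ b₂ := by
  obtain ⟨p, hp, q, hq, hmin⟩ := X.exists_cdist_le ⟨x, hx⟩ ⟨y, hy⟩
  obtain ⟨i, hi, hmem⟩ := huber.exists_geod_mem_interval hnest hp hq hx hy hγ h0 hn
  exact ⟨i, hi, p, hp, q, hq, hmin, hmem⟩
end

section
/- Any group automorphism of a CAT(0) cube complex stabilising two strongly separated hyperplanes ĥ₁, ĥ₂ stabilises their bridge; hence the subgroup Stab(ĥ₁) ∩ Stab(ĥ₂) acts on the finite interval b(ĥ₁, ĥ₂) = I(x₁, x₂), and therefore contains a finite-index subgroup that fixes the gates x₁, x₂ and fixes pointwise any chosen geodesic from x₁ to x₂. -/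
/-- An action of a group `G` by automorphisms on the cube complex `X`: compatible actions
on vertices and hyperplanes preserving separation. -/
structure ActionOn (X : CCC) (G : Type) [Group G] where
  vact : G → X.V → X.V
  hact : G → X.H → X.H
  vact_one : ∀ v, vact 1 v = v
  vact_mul : ∀ g g' v, vact (g * g') v = vact g (vact g' v)
  hact_one : ∀ h, hact 1 h = h
  hact_mul : ∀ g g' h, hact (g * g') h = hact g (hact g' h)
  sep_compat : ∀ (g : G) (h : X.H) (v w : X.V),
    X.Separates (hact g h) (vact g v) (vact g w) ↔ X.Separates h v w

namespace ActionOn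

variable {X : CCC} {G : Type} [Group G] (ρ : ActionOn X G)

/-- the action is essential: no orbit remains at bounded distance from a halfspace -/
def Essential : Prop :=
  ∀ (h : X.H) (b : Bool) (v : X.V),
    ¬ ∃ R : ℕ, ∀ g : G, ∃ u ∈ X.hs h b, X.cdist (ρ.vact g v) u ≤ R

/-- the action is non-elementary: no finite orbit in `X` and no finite orbit in the
boundary at infinity (classes of geodesic rays up to bounded Hausdorff distance) -/
def NonElementary : Prop :=
  (¬ ∃ v : X.V, (Set.range fun g : G => ρ.vact g v).Finite) ∧
  (¬ ∃ (γ : ℕ → X.V) (n : ℕ) (c : Fin n → ℕ → X.V), X.IsRay γ ∧ (∀ i, X.IsRay (c i)) ∧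
      ∀ g : G, ∃ i : Fin n, X.Asymp (fun k => ρ.vact g (γ k)) (c i))

end ActionOn

section AcylHyp

/-- a geodesic metric space -/
def GeodesicSpace (Z : Type*) [MetricSpace Z] : Prop :=
  ∀ x y : Z, ∃ f : ℝ → Z, f 0 = x ∧ f (dist x y) = y ∧
    ∀ s ∈ Set.Icc (0 : ℝ) (dist x y), ∀ t ∈ Set.Icc (0 : ℝ) (dist x y),
      dist (f s) (f t) = |s - t|

/-- Gromov hyperbolicity (four point condition) -/
def GromovHyperbolic (Z : Type*) [MetricSpace Z] : Prop :=
  ∃ δ : ℝ, ∀ x y z w : Z,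
    dist x y + dist z w ≤ max (dist x z + dist y w) (dist x w + dist y z) + δ

/-- an isometric action is acylindrical -/
def AcylindricalHom {G : Type*} [Group G] {Z : Type*} [MetricSpace Z]
    (ρ : G →* (Z ≃ᵢ Z)) : Prop :=
  ∀ r : ℝ, 0 ≤ r → ∃ (L : ℝ) (N : ℕ), ∀ x y : Z, L ≤ dist x y →
    {g : G | dist x (ρ g x) ≤ r ∧ dist y (ρ g y) ≤ r}.Finite ∧
    {g : G | dist x (ρ g x) ≤ r ∧ dist y (ρ g y) ≤ r}.ncard ≤ N

/-- virtually cyclic group -/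
def IsVirtuallyCyclic (G : Type*) [Group G] : Prop :=
  ∃ H : Subgroup G, H.FiniteIndex ∧ IsCyclic H

/-- A group is acylindrically hyperbolic if it is not virtually cyclic and admits an
acylindrical isometric action with unbounded orbits on a hyperbolic geodesic metric space. -/
def AcylindricallyHyperbolic (G : Type*) [Group G] : Prop :=
  ¬ IsVirtuallyCyclic G ∧
  ∃ (Z : Type) (_ : MetricSpace Z) (ρ : G →* (Z ≃ᵢ Z)),
    GeodesicSpace Z ∧ GromovHyperbolic Z ∧ AcylindricalHom ρ ∧
    ∃ z : Z, ¬ Bornology.IsBounded (Set.range fun g : G => ρ g z)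

end AcylHyp

/-- the stabiliser of a hyperplane -/
def ActionOn.stabH {X : CCC} {G : Type} [Group G] (ρ : ActionOn X G) (h : X.H) :
    Subgroup G where
  carrier := {g | ρ.hact g h = h}
  one_mem' := ρ.hact_one h
  mul_mem' := by
    intro a b ha hb
    simp only [Set.mem_setOf_eq] at *
    rw [ρ.hact_mul, hb, ha]
  inv_mem' := by
    intro a ha
    simp only [Set.mem_setOf_eq] at *
    calc ρ.hact a⁻¹ h = ρ.hact a⁻¹ (ρ.hact a h) := by rw [ha]
      _ = ρ.hact (a⁻¹ * a) h := (ρ.hact_mul _ _ _).symm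
      _ = h := by rw [inv_mul_cancel, ρ.hact_one]

namespace CCC

variable (X : CCC)

lemma cdist_self (x : X.V) : X.cdist x x = 0 := by
  have : {h : X.H | X.Separates h x x} = ∅ := by
    ext h; simp [Separates]
  rw [cdist, this, Set.ncard_empty]

lemma sep_pos {h : X.H} {x y : X.V} (hsep : X.Separates h x y) : 0 < X.cdist x y :=
  (Set.ncard_pos (X.finsep x y)).mpr ⟨h, hsep⟩

lemma exists_sep_only (h₁ h₂ : X.H) (hne : h₁ ≠ h₂) :
    ∃ v w : X.V, X.Separates h₁ v w ∧ ¬ X.Separates h₂ v w := by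
  obtain ⟨v, hv⟩ := X.both_sides h₁ true
  obtain ⟨w, hw⟩ := X.both_sides h₁ false
  have hsep : X.Separates h₁ v w := by rw [Separates, hv, hw]; simp
  have key : ∀ N : ℕ, ∀ v w : X.V, X.cdist v w ≤ N → X.Separates h₁ v w →
      ∃ a b : X.V, X.Separates h₁ a b ∧ ¬ X.Separates h₂ a b := by
    intro N
    induction N with
    | zero => intro v w hle hs; have := X.sep_pos hs; omega
    | succ M ih =>
      intro v w hle hs
      have hvw : v ≠ w := fun h => hs (h ▸ rfl)
      obtain ⟨z, hz1, _, hz3⟩ := X.exists_step v w hvw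
      by_cases hc : X.Separates h₁ v z
      · refine ⟨v, z, hc, fun hc2 => ?_⟩
        obtain ⟨a, ha⟩ := Set.ncard_eq_one.mp hz1
        have h1mem : h₁ ∈ {h : X.H | X.side h v ≠ X.side h z} := hc
        have h2mem : h₂ ∈ {h : X.H | X.side h v ≠ X.side h z} := hc2
        rw [ha] at h1mem h2mem
        exact hne (h1mem.trans h2mem.symm)
      · have hc' : X.side h₁ v = X.side h₁ z := not_not.mp hc
        have hzw : X.Separates h₁ z w := fun h => hs (hc'.trans h)
        have hcd : X.cdist z w ≤ M := by
          have : X.cdist z w + 1 = X.cdist v w := hz3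
          omega
        exact ih z w hcd hzw
  exact key (X.cdist v w) v w le_rfl hsep

lemma side_eq_of_mem_interval {x₁ x₂ z : X.V} (hz : z ∈ X.Interval x₁ x₂) {h : X.H}
    (hns : ¬ X.Separates h x₁ x₂) : X.side h z = X.side h x₁ := by
  by_contra hc
  have hns' : X.side h x₁ = X.side h x₂ := not_not.mp hns
  have hsub : insert h {k : X.H | X.Separates k x₁ x₂} ⊆
      {k : X.H | X.Separates k x₁ z} ∪ {k : X.H | X.Separates k z x₂} := by
    intro k hk
    rcases Set.mem_insert_iff.mp hk with rfl | hk
    · exact Or.inl (fun e => hc e.symm)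
    · by_contra hcon
      simp only [Set.mem_union, Set.mem_setOf_eq, Separates, not_or, not_not] at hcon
      exact hk ((hcon.1).trans hcon.2)
  have f1 : {k : X.H | X.Separates k x₁ z}.Finite := X.finsep x₁ z
  have f2 : {k : X.H | X.Separates k z x₂}.Finite := X.finsep z x₂
  have f0 : {k : X.H | X.Separates k x₁ x₂}.Finite := X.finsep x₁ x₂
  have h1 : (insert h {k : X.H | X.Separates k x₁ x₂}).ncard ≤
      ({k : X.H | X.Separates k x₁ z} ∪ {k : X.H | X.Separates k z x₂}).ncard :=
    Set.ncard_le_ncard hsub (f1.union f2)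
  rw [Set.ncard_insert_of_notMem hns f0] at h1
  have h2 := Set.ncard_union_le {k : X.H | X.Separates k x₁ z} {k : X.H | X.Separates k z x₂}
  have hz' : X.cdist x₁ z + X.cdist z x₂ = X.cdist x₁ x₂ := hz
  unfold cdist at hz'
  omega

end CCC

section Aux

variable {X : CCC} {G : Type} [Group G] (ρ : ActionOn X G)

lemma vact_inv_cancel (g : G) (v : X.V) : ρ.vact g (ρ.vact g⁻¹ v) = v := by
  rw [← ρ.vact_mul, mul_inv_cancel, ρ.vact_one]

lemma hact_inv_cancel (g : G) (h : X.H) : ρ.hact g (ρ.hact g⁻¹ h) = h := by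
  rw [← ρ.hact_mul, mul_inv_cancel, ρ.hact_one]

lemma hact_injective (g : G) : Function.Injective (ρ.hact g) := by
  intro a b hab
  have : ρ.hact g⁻¹ (ρ.hact g a) = ρ.hact g⁻¹ (ρ.hact g b) := by rw [hab]
  rwa [← ρ.hact_mul, ← ρ.hact_mul, inv_mul_cancel, ρ.hact_one, ρ.hact_one] at this

lemma cdist_vact (g : G) (v w : X.V) :
    X.cdist (ρ.vact g v) (ρ.vact g w) = X.cdist v w := by
  have himg : {h : X.H | X.Separates h (ρ.vact g v) (ρ.vact g w)}
      = ρ.hact g '' {h : X.H | X.Separates h v w} := by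
    ext h
    simp only [Set.mem_image, Set.mem_setOf_eq]
    constructor
    · intro hs
      refine ⟨ρ.hact g⁻¹ h, ?_, hact_inv_cancel ρ g h⟩
      rw [← ρ.sep_compat g (ρ.hact g⁻¹ h) v w, hact_inv_cancel ρ g h]
      exact hs
    · rintro ⟨k, hk, rfl⟩
      exact (ρ.sep_compat g k v w).mpr hk
  rw [CCC.cdist, CCC.cdist, himg, Set.ncard_image_of_injective _ (hact_injective ρ g)]

lemma side_act_const {g : G} {h : X.H} (hg : ρ.hact g h = h) :
    ∃ c : Bool, ∀ v, X.side h (ρ.vact g v) = xor c (X.side h v) := by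
  obtain ⟨v₀, -⟩ := X.both_sides h true
  refine ⟨xor (X.side h (ρ.vact g v₀)) (X.side h v₀), fun v => ?_⟩
  have hcompat := ρ.sep_compat g h v v₀
  rw [hg] at hcompat
  unfold CCC.Separates at hcompat
  revert hcompat
  generalize X.side h (ρ.vact g v) = a
  generalize X.side h (ρ.vact g v₀) = a₀
  generalize X.side h v = b
  generalize X.side h v₀ = b₀
  revert a a₀ b b₀; decide

lemma sides_preserved {g : G} {h₁ h₂ : X.H} (hss : X.StronglySeparated h₁ h₂)
    (hg1 : ρ.hact g h₁ = h₁) (hg2 : ρ.hact g h₂ = h₂) :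
    (∀ v, X.side h₁ (ρ.vact g v) = X.side h₁ v) ∧
    (∀ v, X.side h₂ (ρ.vact g v) = X.side h₂ v) := by
  obtain ⟨c₁, hc₁⟩ := side_act_const ρ hg1
  obtain ⟨c₂, hc₂⟩ := side_act_const ρ hg2
  obtain ⟨hne, hncross, -⟩ := hss
  have hab : ∃ a b : Bool, ∀ v, ¬ (X.side h₁ v = a ∧ X.side h₂ v = b) := by
    by_contra hcon
    push_neg at hcon
    exact hncross hcon
  obtain ⟨a, b, hab⟩ := hab
  have himg : ∀ v, ¬ (X.side h₁ v = xor c₁ a ∧ X.side h₂ v = xor c₂ b) := by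
    rintro v ⟨e1, e2⟩
    have hv : ρ.vact g (ρ.vact g⁻¹ v) = v := vact_inv_cancel ρ g v
    apply hab (ρ.vact g⁻¹ v)
    have t1 := hc₁ (ρ.vact g⁻¹ v); rw [hv] at t1
    have t2 := hc₂ (ρ.vact g⁻¹ v); rw [hv] at t2
    rw [t1] at e1; rw [t2] at e2
    constructor
    · revert e1; cases c₁ <;> cases a <;> cases X.side h₁ (ρ.vact g⁻¹ v) <;> simp
    · revert e2; cases c₂ <;> cases b <;> cases X.side h₂ (ρ.vact g⁻¹ v) <;> simp
  match c₁, c₂ with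
  | false, false =>
    exact ⟨fun v => by simpa using hc₁ v, fun v => by simpa using hc₂ v⟩
  | false, true =>
    exfalso
    obtain ⟨v, hv⟩ := X.both_sides h₁ a
    simp only [Bool.false_xor, Bool.true_xor] at himg
    have H1 := hab v
    have H2 := himg v
    cases hx : X.side h₁ v <;> cases a <;> cases b <;> simp_all
  | true, false =>
    exfalso
    obtain ⟨v, hv⟩ := X.both_sides h₂ b
    simp only [Bool.false_xor, Bool.true_xor] at himg
    have H1 := hab v
    have H2 := himg v
    cases hx : X.side h₂ v <;> cases a <;> cases b <;> simp_all
  | true, true =>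
    exfalso
    obtain ⟨v, w, hsep, hnsep⟩ := X.exists_sep_only h₁ h₂ hne
    simp only [Bool.true_xor] at himg
    have hnsep' : X.side h₂ v = X.side h₂ w := not_not.mp hnsep
    have hsep' : X.side h₁ v ≠ X.side h₁ w := hsep
    have Hv1 := hab v; have Hv2 := himg v
    have Hw1 := hab w; have Hw2 := himg w
    revert Hv1 Hv2 Hw1 Hw2 hnsep' hsep'
    cases X.side h₁ v <;> cases X.side h₁ w <;> cases X.side h₂ v <;> cases X.side h₂ w <;>
      cases a <;> cases b <;> simp_all

end Aux
/-- any automorphism stabilising two strongly separated hyperplanes stabilises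
their bridge (the interval between the gates); hence `Stab(h₁) ∩ Stab(h₂)` contains a
finite-index subgroup fixing the gates and fixing pointwise any chosen geodesic between
them. -/
theorem stmt14 {G : Type} [Group G] (X : CCC) (hfd : X.FiniteDim) (ρ : ActionOn X G)
    (h₁ h₂ : X.H) (hss : X.StronglySeparated h₁ h₂) (b₁ b₂ : Bool)
    (x₁ x₂ : X.V) (hx₁ : x₁ ∈ X.hs h₁ b₁) (hx₂ : x₂ ∈ X.hs h₂ (!b₂))
    (hmin : ∀ y₁ ∈ X.hs h₁ b₁, ∀ y₂ ∈ X.hs h₂ (!b₂), X.cdist x₁ x₂ ≤ X.cdist y₁ y₂)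
    (huniq : ∀ z₁ ∈ X.hs h₁ b₁, ∀ z₂ ∈ X.hs h₂ (!b₂),
      X.cdist z₁ z₂ = X.cdist x₁ x₂ → z₁ = x₁ ∧ z₂ = x₂) :
    (∀ g ∈ ρ.stabH h₁ ⊓ ρ.stabH h₂, ∀ z ∈ X.Interval x₁ x₂,
        ρ.vact g z ∈ X.Interval x₁ x₂) ∧
    ∀ (γ : ℕ → X.V) (n : ℕ), X.IsGeod γ n → γ 0 = x₁ → γ n = x₂ →
      ∃ K : Subgroup ↥(ρ.stabH h₁ ⊓ ρ.stabH h₂), K.FiniteIndex ∧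
        ∀ g : K, ρ.vact ((g : ↥(ρ.stabH h₁ ⊓ ρ.stabH h₂)) : G) x₁ = x₁ ∧
          ρ.vact ((g : ↥(ρ.stabH h₁ ⊓ ρ.stabH h₂)) : G) x₂ = x₂ ∧
          ∀ i ≤ n, ρ.vact ((g : ↥(ρ.stabH h₁ ⊓ ρ.stabH h₂)) : G) (γ i) = γ i := by
  have hA : ∀ g ∈ ρ.stabH h₁ ⊓ ρ.stabH h₂, ∀ z ∈ X.Interval x₁ x₂,
      ρ.vact g z ∈ X.Interval x₁ x₂ := by
    intro g hg z hz
    rw [Subgroup.mem_inf] at hg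
    have hg1 : ρ.hact g h₁ = h₁ := hg.1
    have hg2 : ρ.hact g h₂ = h₂ := hg.2
    obtain ⟨s1, s2⟩ := sides_preserved ρ hss hg1 hg2
    have hx₁' : ρ.vact g x₁ ∈ X.hs h₁ b₁ := by
      show X.side h₁ (ρ.vact g x₁) = b₁
      rw [s1]; exact hx₁
    have hx₂' : ρ.vact g x₂ ∈ X.hs h₂ (!b₂) := by
      show X.side h₂ (ρ.vact g x₂) = !b₂
      rw [s2]; exact hx₂
    obtain ⟨e1, e2⟩ := huniq _ hx₁' _ hx₂' (cdist_vact ρ g x₁ x₂)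
    show X.cdist x₁ (ρ.vact g z) + X.cdist (ρ.vact g z) x₂ = X.cdist x₁ x₂
    calc X.cdist x₁ (ρ.vact g z) + X.cdist (ρ.vact g z) x₂
        = X.cdist (ρ.vact g x₁) (ρ.vact g z) + X.cdist (ρ.vact g z) (ρ.vact g x₂) := by
          rw [e1, e2]
      _ = X.cdist x₁ z + X.cdist z x₂ := by rw [cdist_vact, cdist_vact]
      _ = X.cdist x₁ x₂ := hz
  refine ⟨hA, ?_⟩
  intro γ n hgeod hst hend
  -- the interval is finite
  have hSfin : {h : X.H | X.Separates h x₁ x₂}.Finite := X.finsep x₁ x₂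
  haveI := hSfin.to_subtype
  haveI hIfin : Finite ↥(X.Interval x₁ x₂) := by
    have hinj : Function.Injective
        (fun (z : ↥(X.Interval x₁ x₂)) (s : ↥{h : X.H | X.Separates h x₁ x₂}) =>
          X.side s.1 z.1) := by
      intro z z' he
      apply Subtype.ext
      apply X.eq_of_notsep
      intro h
      by_cases hh : X.Separates h x₁ x₂
      · exact congrFun he ⟨h, hh⟩
      · rw [X.side_eq_of_mem_interval z.2 hh, X.side_eq_of_mem_interval z'.2 hh]
    exact Finite.of_injective _ hinj
  -- the permutation representation on the interval
  have act_mem : ∀ (g : ↥(ρ.stabH h₁ ⊓ ρ.stabH h₂)) (z : ↥(X.Interval x₁ x₂)),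
      ρ.vact (g : G) z.1 ∈ X.Interval x₁ x₂ := fun g z => hA g g.2 z.1 z.2
  let φ : ↥(ρ.stabH h₁ ⊓ ρ.stabH h₂) →* Equiv.Perm ↥(X.Interval x₁ x₂) :=
    { toFun := fun g =>
        { toFun := fun z => ⟨ρ.vact (g : G) z.1, act_mem g z⟩
          invFun := fun z => ⟨ρ.vact ((g⁻¹ : ↥(ρ.stabH h₁ ⊓ ρ.stabH h₂)) : G) z.1,
            act_mem g⁻¹ z⟩
          left_inv := by
            intro z
            apply Subtype.ext
            show ρ.vact _ (ρ.vact _ z.1) = z.1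
            rw [← ρ.vact_mul]
            simp only [Subgroup.coe_inv, inv_mul_cancel, ρ.vact_one]
          right_inv := by
            intro z
            apply Subtype.ext
            show ρ.vact _ (ρ.vact _ z.1) = z.1
            rw [← ρ.vact_mul]
            simp only [Subgroup.coe_inv, mul_inv_cancel, ρ.vact_one] }
      map_one' := by
        apply Equiv.ext
        intro z
        apply Subtype.ext
        exact ρ.vact_one z.1
      map_mul' := by
        intro g g'
        apply Equiv.ext
        intro z
        apply Subtype.ext
        exact ρ.vact_mul (g : G) (g' : G) z.1 }
  haveI : Finite (Equiv.Perm ↥(X.Interval x₁ x₂)) := by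
    have : Function.Injective
        (fun (e : Equiv.Perm ↥(X.Interval x₁ x₂)) => (e : ↥(X.Interval x₁ x₂) → ↥(X.Interval x₁ x₂))) :=
      fun a b h => Equiv.ext fun x => congrFun h x
    exact Finite.of_injective _ this
  refine ⟨φ.ker, inferInstance, ?_⟩
  intro g
  have hker : φ (g : ↥(ρ.stabH h₁ ⊓ ρ.stabH h₂)) = 1 := g.2
  have hfix : ∀ z (hz : z ∈ X.Interval x₁ x₂),
      ρ.vact ((g : ↥(ρ.stabH h₁ ⊓ ρ.stabH h₂)) : G) z = z := by
    intro z hz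
    have : φ (g : ↥(ρ.stabH h₁ ⊓ ρ.stabH h₂)) ⟨z, hz⟩ = ⟨z, hz⟩ := by rw [hker]; rfl
    exact congrArg Subtype.val this
  have hx₁I : x₁ ∈ X.Interval x₁ x₂ := by
    show X.cdist x₁ x₁ + X.cdist x₁ x₂ = X.cdist x₁ x₂
    rw [X.cdist_self]; omega
  have hx₂I : x₂ ∈ X.Interval x₁ x₂ := by
    show X.cdist x₁ x₂ + X.cdist x₂ x₂ = X.cdist x₁ x₂
    rw [X.cdist_self]; omega
  have hγI : ∀ i ≤ n, γ i ∈ X.Interval x₁ x₂ := by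
    intro i hi
    show X.cdist x₁ (γ i) + X.cdist (γ i) x₂ = X.cdist x₁ x₂
    rw [← hst, ← hend, hgeod 0 i (Nat.zero_le i) hi, hgeod i n hi le_rfl,
      hgeod 0 n (Nat.zero_le n) le_rfl]
    omega
  exact ⟨hfix x₁ hx₁I, hfix x₂ hx₂I, fun i hi => hfix (γ i) (hγI i hi)⟩
end
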